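/- arXiv:2303.06787 — 12 statements merged into one kernel-verified Lean document; each statement's English description precedes it below -/
import Mathlib

section
/- A weak contact semilattice satisfying condition (D1) also satisfies condition (D1+): for every positive n and elements a, b, c_{1,0}, c_{1,1}, …, c_{n,0}, c_{n,1}, if c_{i,0} is not in contact with c_{i,1} for each i, and b ≤ a + c_{1,f(1)} + … + c_{n,f(n)} for every function f : {1,…,n} → {0,1}, then b ≤ a. -/
lemma sup_univ_snoc {S : Type*} [SemilatticeSup S] [OrderBot S] {n : ℕ}
    (g : Fin (n + 1) → S) :
    Finset.univ.sup g = Finset.univ.sup (fun i : Fin n => g i.castSucc) ⊔ g (Fin.last n) := by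
  apply le_antisymm
  · apply Finset.sup_le
    intro i _
    induction i using Fin.lastCases with
    | last => exact le_sup_right
    | cast i => exact le_sup_of_le_left (Finset.le_sup (f := fun i => g i.castSucc) (Finset.mem_univ i))
  · apply sup_le
    · exact Finset.sup_le fun i _ => Finset.le_sup (Finset.mem_univ _)
    · exact Finset.le_sup (Finset.mem_univ _)

/-- A weak contact semilattice satisfying (D1) also satisfies (D1+). -/
theorem d1_implies_d1plus {S : Type*} [SemilatticeSup S] [OrderBot S] (δ : S → S → Prop)
    (hSym : ∀ a b : S, δ a b → δ b a)
    (hEmp : ∀ a b : S, δ a b → ⊥ < a ∧ ⊥ < b)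
    (hExt : ∀ a b a₁ b₁ : S, δ a b → a ≤ a₁ → b ≤ b₁ → δ a₁ b₁)
    (hRef : ∀ n : S, n ≠ ⊥ → δ n n)
    (hD1 : ∀ a b c₀ c₁ : S, b ≤ a ⊔ c₀ → b ≤ a ⊔ c₁ → ¬ δ c₀ c₁ → b ≤ a) :
    ∀ (n : ℕ) (a b : S) (c : Fin (n + 1) → Fin 2 → S),
      (∀ i, ¬ δ (c i 0) (c i 1)) →
      (∀ f : Fin (n + 1) → Fin 2, b ≤ a ⊔ Finset.univ.sup (fun i => c i (f i))) →
      b ≤ a := by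
  intro n
  induction n with
  | zero =>
    intro a b c hc hf
    apply hD1 a b (c 0 0) (c 0 1)
    · have := hf (fun _ => 0)
      simpa using this
    · have := hf (fun _ => 1)
      simpa using this
    · exact hc 0
  | succ n ih =>
    intro a b c hc hf
    apply ih a b (fun i j => c i.castSucc j) (fun i => hc i.castSucc)
    intro f
    apply hD1 (a ⊔ Finset.univ.sup fun i : Fin (n+1) => c i.castSucc (f i)) b
      (c (Fin.last (n+1)) 0) (c (Fin.last (n+1)) 1)
    · have := hf (Fin.snoc f 0 : Fin (n+1+1) → Fin 2)
      rw [sup_univ_snoc (fun i => c i ((Fin.snoc f 0 : Fin (n+1+1) → Fin 2) i))] at this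
      simpa [sup_assoc, Fin.snoc_castSucc, Fin.snoc_last] using this
    · have := hf (Fin.snoc f 1 : Fin (n+1+1) → Fin 2)
      rw [sup_univ_snoc (fun i => c i ((Fin.snoc f 1 : Fin (n+1+1) → Fin 2) i))] at this
      simpa [sup_assoc, Fin.snoc_castSucc, Fin.snoc_last] using this
    · exact hc (Fin.last (n+1))
end

section
/- In a join semilattice with 0 and symmetric binary relation δ satisfying (Ext), the instance of condition (D2) with n = 2 implies additivity: if a δ (b + c), then a δ b or a δ c. -/
/-- For a symmetric relation satisfying (Ext), the `n = 2` instance of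
condition (D2) implies additivity (Add). -/
theorem d2_two_implies_add {S : Type*} [SemilatticeSup S] [OrderBot S] (δ : S → S → Prop)
    (hSym : ∀ a b : S, δ a b → δ b a)
    (hExt : ∀ a b a₁ b₁ : S, δ a b → a ≤ a₁ → b ≤ b₁ → δ a₁ b₁)
    (hD2₂ : ∀ a b c₁₀ c₁₁ c₂₀ c₂₁ : S, ¬ δ c₁₀ c₁₁ → ¬ δ c₂₀ c₂₁ →
      (b ≤ c₁₀ ⊔ c₂₀ ∨ a ≤ c₁₀ ⊔ c₂₀) →
      (b ≤ c₁₀ ⊔ c₂₁ ∨ a ≤ c₁₀ ⊔ c₂₁) →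
      (b ≤ c₁₁ ⊔ c₂₀ ∨ a ≤ c₁₁ ⊔ c₂₀) →
      (b ≤ c₁₁ ⊔ c₂₁ ∨ a ≤ c₁₁ ⊔ c₂₁) → ¬ δ b a) :
    ∀ a b c : S, δ a (b ⊔ c) → δ a b ∨ δ a c := by
  intro a b c h
  by_contra hcon
  push_neg at hcon
  obtain ⟨hb, hc⟩ := hcon
  have hba : ¬ δ b a := fun h' => hb (hSym _ _ h')
  have hca : ¬ δ c a := fun h' => hc (hSym _ _ h')
  exact hD2₂ a (b ⊔ c) b a c a hba hca
    (Or.inl le_rfl) (Or.inr le_sup_right) (Or.inr le_sup_left)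
    (Or.inr le_sup_left) (hSym _ _ h)
end

section
/- Any distributive lattice with 0 endowed with the overlap contact relation satisfies condition (D2): if c_{1,0} ⊓ c_{1,1} = 0, …, c_{n,0} ⊓ c_{n,1} = 0 and for every f : {1,…,n} → {0,1} either b ≤ c_{1,f(1)} ⊔ … ⊔ c_{n,f(n)} or a ≤ c_{1,f(1)} ⊔ … ⊔ c_{n,f(n)}, then a ⊓ b = 0. -/
/-! By distributivity, `a ⊓ b` lies below the meet over all choices `f` of `⨆ i, c i (f i)`,
which equals `⨆ i, (c i 0 ⊓ c i 1) = ⊥`. As `L` need not have a top, that meet is replaced by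
the statement "below every `⨆ i, c i (f i)` implies below `⨆ i, (c i 0 ⊓ c i 1)`", proved one
coordinate at a time from `(u ⊔ c₀) ⊓ (u ⊔ c₁) = u ⊔ (c₀ ⊓ c₁)`. -/

theorem Finset.le_sup_sup_inf_of_forall_le_sup_sup {L ι : Type*} [DistribLattice L] [OrderBot L]
    [DecidableEq ι] (s : Finset ι) (c : ι → Fin 2 → L) (x d : L)
    (h : ∀ f : ι → Fin 2, x ≤ d ⊔ s.sup fun i => c i (f i)) :
    x ≤ d ⊔ s.sup fun i => c i 0 ⊓ c i 1 := by
  induction s using Finset.induction generalizing d with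
  | empty => simpa using h 0
  | insert i s hi ih =>
    rw [sup_insert, ← sup_assoc]
    refine ih _ fun f => ?_
    have hchoice (k : Fin 2) : x ≤ d ⊔ s.sup (fun j => c j (f j)) ⊔ c i k := by
      have hs : (s.sup fun j => c j (Function.update f i k j)) = s.sup fun j => c j (f j) :=
        Finset.sup_congr rfl fun j hj => by rw [Function.update_of_ne (ne_of_mem_of_not_mem hj hi)]
      have := h (Function.update f i k)
      rwa [sup_insert, Function.update_self, hs, sup_left_comm, sup_comm] at this
    calc x ≤ (d ⊔ s.sup (fun j => c j (f j)) ⊔ c i 0) ⊓ (d ⊔ s.sup (fun j => c j (f j)) ⊔ c i 1) :=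
          le_inf (hchoice 0) (hchoice 1)
      _ = d ⊔ (c i 0 ⊓ c i 1) ⊔ s.sup fun j => c j (f j) := by
          rw [← sup_inf_left, sup_right_comm]

/-- A distributive lattice with `⊥` and the overlap contact satisfies (D2). -/
theorem overlap_satisfies_d2 {L : Type*} [DistribLattice L] [OrderBot L]
    (n : ℕ) (a b : L) (c : Fin n → Fin 2 → L)
    (hc : ∀ i, c i 0 ⊓ c i 1 = ⊥)
    (h : ∀ f : Fin n → Fin 2,
      b ≤ Finset.univ.sup (fun i => c i (f i)) ∨
      a ≤ Finset.univ.sup (fun i => c i (f i))) :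
    a ⊓ b = ⊥ := by
  have hab : a ⊓ b ≤ ⊥ ⊔ Finset.univ.sup fun i => c i 0 ⊓ c i 1 := by
    refine Finset.univ.le_sup_sup_inf_of_forall_le_sup_sup c _ _ fun f => ?_
    rw [bot_sup_eq]
    rcases h f with hb | ha
    · exact inf_le_right.trans hb
    · exact inf_le_left.trans ha
  simpa [hc] using hab
end

section
/- Any distributive lattice with 0 endowed with an additive weak contact relation satisfies condition (D2): if ¬(c_{i,0} δ c_{i,1}) for each i = 1,…,n, and for every f : {1,…,n} → {0,1} either b ≤ c_{1,f(1)} ⊔ … ⊔ c_{n,f(n)} or a ≤ c_{1,f(1)} ⊔ … ⊔ c_{n,f(n)}, then ¬(b δ a). -/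
/-!
Suppose `b δ a`. The prime ideal theorem for distributive lattices, applied first to the ideal of
elements not in contact with `b` and then to the ideal of elements not in contact with the whole
prime filter just obtained, yields prime ideals `J ∌ a` and `K ∌ b` such that every element
outside `J` is in contact with every element outside `K`. By `Ref`, `¬ c_{i,0} δ c_{i,1}` forces
`c_{i,0} ⊓ c_{i,1} = ⊥`; primality then puts one of `c_{i,0}`, `c_{i,1}` in `J` and one in `K`,
and the contact between `Jᶜ` and `Kᶜ` forces a common choice. Taking it as `f(i)`, the join
`c_{1,f(1)} ⊔ … ⊔ c_{n,f(n)}` lies in `J ⊓ K`, so it bounds neither `a` nor `b`.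
-/

section

open Order Order.Ideal

variable {L : Type*} [DistribLattice L] [OrderBot L]

theorem Order.Ideal.exists_isPrime_notMem_of_monotone {C : L → Prop} (hmono : Monotone C)
    (hsup : ∀ x y, C (x ⊔ y) → C x ∨ C y) (hbot : ¬ C ⊥) {b : L} (hb : C b) :
    ∃ J : Ideal L, J.IsPrime ∧ b ∉ J ∧ ∀ x ∉ J, C x := by
  have hI : IsIdeal {x | ¬ C x} :=
    { IsLowerSet := fun x y hyx hx hy => hx (hmono hyx hy)
      Nonempty := ⟨⊥, hbot⟩
      Directed := fun x hx y hy =>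
        ⟨x ⊔ y, fun h => (hsup x y h).elim hx hy, le_sup_left, le_sup_right⟩ }
  have hdisj : Disjoint (PFilter.principal b : Set L) hI.toIdeal :=
    Set.disjoint_left.2 fun x hbx hx => hx (hmono hbx hb)
  obtain ⟨J, hJ, hIJ, hdisjJ⟩ := DistribLattice.prime_ideal_of_disjoint_filter_ideal hdisj
  refine ⟨J, hJ, Set.disjoint_left.1 hdisjJ (PFilter.mem_principal.2 le_rfl), fun x hx => ?_⟩
  by_contra hCx
  exact hx (hIJ hCx)

theorem exists_isPrime_forall_contact (δ : L → L → Prop)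
    (hExt : ∀ a b a₁ b₁ : L, δ a b → a ≤ a₁ → b ≤ b₁ → δ a₁ b₁)
    (hAdd : ∀ a b c : L, δ a (b ⊔ c) → δ a b ∨ δ a c) (hbot : ∀ x, ¬ δ x ⊥)
    {S : Set L} (hS : InfClosed S) (hSne : S.Nonempty) {a : L} (ha : ∀ x ∈ S, δ x a) :
    ∃ J : Ideal L, J.IsPrime ∧ a ∉ J ∧ ∀ x ∈ S, ∀ y ∉ J, δ x y := by
  have hmono : Monotone fun y => ∀ x ∈ S, δ x y :=
    fun y z hyz hy x hx => hExt _ _ _ _ (hy x hx) le_rfl hyz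
  have hsup (y z : L) (h : ∀ x ∈ S, δ x (y ⊔ z)) :
      (∀ x ∈ S, δ x y) ∨ ∀ x ∈ S, δ x z := by
    by_contra! ⟨⟨x₁, hx₁, hy⟩, ⟨x₂, hx₂, hz⟩⟩
    rcases hAdd _ y z (h _ (hS hx₁ hx₂)) with h' | h'
    · exact hy (hExt _ _ _ _ h' inf_le_left le_rfl)
    · exact hz (hExt _ _ _ _ h' inf_le_right le_rfl)
  obtain ⟨J, hJ, haJ, hC⟩ := Ideal.exists_isPrime_notMem_of_monotone hmono hsup
    (fun h => hbot _ (h _ hSne.some_mem)) ha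
  exact ⟨J, hJ, haJ, fun x hx y hy => hC y hy x hx⟩

theorem inf_eq_bot_of_not_contact (δ : L → L → Prop)
    (hExt : ∀ a b a₁ b₁ : L, δ a b → a ≤ a₁ → b ≤ b₁ → δ a₁ b₁)
    (hRef : ∀ n : L, n ≠ ⊥ → δ n n) {u v : L} (huv : ¬ δ u v) : u ⊓ v = ⊥ := by
  by_contra h
  exact huv (hExt _ _ _ _ (hRef _ h) inf_le_left inf_le_right)

theorem mem_inf_or_mem_inf_of_not_contact (δ : L → L → Prop) (hSym : ∀ a b : L, δ a b → δ b a)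
    {J K : Ideal L} (hJ : J.IsPrime) (hK : K.IsPrime) (hJK : ∀ x ∉ J, ∀ y ∉ K, δ x y)
    {u v : L} (huv : ¬ δ u v) (hinf : u ⊓ v = ⊥) : u ∈ J ⊓ K ∨ v ∈ J ⊓ K := by
  simp only [mem_inf]
  rcases hJ.mem_or_mem (hinf ▸ J.bot_mem) with huJ | hvJ <;>
    rcases hK.mem_or_mem (hinf ▸ K.bot_mem) with huK | hvK
  · exact .inl ⟨huJ, huK⟩
  · by_cases huK : u ∈ K
    · exact .inl ⟨huJ, huK⟩
    by_cases hvJ : v ∈ J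
    · exact .inr ⟨hvJ, hvK⟩
    exact absurd (hSym _ _ (hJK v hvJ u huK)) huv
  · by_cases huJ : u ∈ J
    · exact .inl ⟨huJ, huK⟩
    by_cases hvK : v ∈ K
    · exact .inr ⟨hvJ, hvK⟩
    exact absurd (hJK u huJ v hvK) huv
  · exact .inr ⟨hvJ, hvK⟩

end

/-- A distributive lattice with `⊥` and an additive weak contact relation
satisfies (D2). -/
theorem additive_contact_satisfies_d2 {L : Type*} [DistribLattice L] [OrderBot L]
    (δ : L → L → Prop)
    (hSym : ∀ a b : L, δ a b → δ b a)
    (hEmp : ∀ a b : L, δ a b → ⊥ < a ∧ ⊥ < b)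
    (hExt : ∀ a b a₁ b₁ : L, δ a b → a ≤ a₁ → b ≤ b₁ → δ a₁ b₁)
    (hRef : ∀ n : L, n ≠ ⊥ → δ n n)
    (hAdd : ∀ a b c : L, δ a (b ⊔ c) → δ a b ∨ δ a c) :
    ∀ (n : ℕ) (a b : L) (c : Fin n → Fin 2 → L),
      (∀ i, ¬ δ (c i 0) (c i 1)) →
      (∀ f : Fin n → Fin 2,
        b ≤ Finset.univ.sup (fun i => c i (f i)) ∨
        a ≤ Finset.univ.sup (fun i => c i (f i))) →
      ¬ δ b a := by
  intro n a b c hc hcover hba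
  have hbot (x : L) : ¬ δ x ⊥ := fun h => (hEmp x ⊥ h).2.false
  obtain ⟨J, hJ, haJ, hbJ⟩ := exists_isPrime_forall_contact δ hExt hAdd hbot
    (S := Set.Ici b) (fun _ hx _ hy => le_inf hx hy) ⟨b, le_rfl⟩
    (fun x hx => hExt _ _ _ _ hba hx le_rfl)
  obtain ⟨K, hK, hbK, hJK⟩ := exists_isPrime_forall_contact δ hExt hAdd hbot
    (S := (J : Set L)ᶜ) (fun _ hx _ hy h => hx ((hJ.mem_or_mem h).resolve_right hy)) ⟨a, haJ⟩
    (fun x hx => hSym _ _ (hbJ b le_rfl x hx))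
  have hchoice (i : Fin n) : ∃ k, c i k ∈ J ⊓ K :=
    (mem_inf_or_mem_inf_of_not_contact δ hSym hJ hK hJK (hc i)
      (inf_eq_bot_of_not_contact δ hExt hRef (hc i))).elim (⟨0, ·⟩) (⟨1, ·⟩)
  choose f hf using hchoice
  have hsup : Finset.univ.sup (fun i => c i (f i)) ∈ J ⊓ K :=
    (Order.Ideal.finsetSup_mem_iff _).2 fun i _ => hf i
  rcases hcover f with hb | ha
  · exact hbK (K.lower hb (Order.Ideal.mem_inf.1 hsup).2)
  · exact haJ (J.lower ha (Order.Ideal.mem_inf.1 hsup).1)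
end

section
/- If a weak contact semilattice S can be embedded (as a contact semilattice) into a distributive lattice with additive weak contact, then S satisfies (D1) and (D2). -/
/-!
If `b δ a` in a distributive lattice with additive contact, a Zorn argument yields a pair of
prime ideals `I ∌ b`, `J ∌ a` whose complements are in contact elementwise (a "clan"). A
non-contacting pair `c₀, c₁` has `c₀ ⊓ c₁ = ⊥`, so by primality one of `c₀, c₁` lies in
`I ∩ J`; choosing such a `c_{i,f(i)}` for every `i` gives a join lying in both ideals, so it is
above neither `b` nor `a`, which is (D2). (D1) is distributivity:
`(a ⊔ c₀) ⊓ (a ⊔ c₁) = a ⊔ (c₀ ⊓ c₁) = a`. Both transfer along an embedding, since an injective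
join-preserving map reflects the order.
-/

open Order

theorem Order.Ideal.IsPrime.infClosed_compl {P : Type*} [SemilatticeInf P] {I : Ideal P}
    (hI : I.IsPrime) : InfClosed (I : Set P)ᶜ :=
  fun _ ha _ hb hab => (hI.mem_or_mem hab).elim ha hb

structure IsAdditiveContact {L : Type*} [SemilatticeSup L] [OrderBot L]
    (δ : L → L → Prop) : Prop where
  symm : ∀ a b, δ a b → δ b a
  bot_lt : ∀ a b, δ a b → ⊥ < a ∧ ⊥ < b
  mono : ∀ a b a₁ b₁, δ a b → a ≤ a₁ → b ≤ b₁ → δ a₁ b₁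
  refl : ∀ a, a ≠ ⊥ → δ a a
  sup : ∀ a b c, δ a (b ⊔ c) → δ a b ∨ δ a c

namespace IsAdditiveContact

section Lattice

variable {L : Type*} [Lattice L] [OrderBot L] {δ : L → L → Prop}

theorem inf_eq_bot_of_not (hδ : IsAdditiveContact δ) {a b : L} (h : ¬ δ a b) : a ⊓ b = ⊥ := by
  by_contra hab
  exact h (hδ.mono _ _ _ _ (hδ.refl _ hab) inf_le_left inf_le_right)

def notContactIdeal (hδ : IsAdditiveContact δ) (G : Set L) (hG : G.Nonempty)
    (hGinf : InfClosed G) : Ideal L :=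
  IsIdeal.toIdeal (I := {z | ∃ p ∈ G, ¬ δ p z})
    { IsLowerSet := fun _ _ hzw ⟨p, hp, hpz⟩ =>
        ⟨p, hp, fun hpw => hpz (hδ.mono _ _ _ _ hpw le_rfl hzw)⟩
      Nonempty := ⟨⊥, hG.some, hG.some_mem, fun h => (hδ.bot_lt _ _ h).2.false⟩
      Directed := by
        rintro z₁ ⟨p₁, hp₁, hpz₁⟩ z₂ ⟨p₂, hp₂, hpz₂⟩
        refine ⟨z₁ ⊔ z₂, ⟨p₁ ⊓ p₂, hGinf hp₁ hp₂, fun h => ?_⟩, le_sup_left, le_sup_right⟩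
        rcases hδ.sup _ _ _ h with h | h
        exacts [hpz₁ (hδ.mono _ _ _ _ h inf_le_left le_rfl),
          hpz₂ (hδ.mono _ _ _ _ h inf_le_right le_rfl)] }

theorem exists_mem_mem_of_not (hδ : IsAdditiveContact δ) {I J : Ideal L} (hI : I.IsPrime)
    (hJ : J.IsPrime) (hIJ : ∀ p ∉ I, ∀ q ∉ J, δ p q) {c : Fin 2 → L} (hc : ¬ δ (c 0) (c 1)) :
    ∃ ε, c ε ∈ I ∧ c ε ∈ J := by
  have hprime : ∀ K : Ideal L, K.IsPrime → c 0 ∈ K ∨ c 1 ∈ K := fun K hK =>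
    hK.mem_or_mem (hδ.inf_eq_bot_of_not hc ▸ K.bot_mem)
  by_contra! h
  rcases hprime I hI with h₀I | h₁I
  · have h₀J : c 0 ∉ J := h 0 h₀I
    have h₁J : c 1 ∈ J := (hprime J hJ).resolve_left h₀J
    exact hc (hδ.symm _ _ (hIJ _ (fun h₁I => h 1 h₁I h₁J) _ h₀J))
  · have h₁J : c 1 ∉ J := h 1 h₁I
    exact hc (hIJ _ (fun h₀I => h 0 h₀I ((hprime J hJ).resolve_right h₁J)) _ h₁J)

end Lattice

section DistribLattice

variable {L : Type*} [DistribLattice L] [OrderBot L] {δ : L → L → Prop}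

theorem le_of_le_sup_of_le_sup (hδ : IsAdditiveContact δ) {a b c₀ c₁ : L}
    (h₀ : b ≤ a ⊔ c₀) (h₁ : b ≤ a ⊔ c₁) (hc : ¬ δ c₀ c₁) : b ≤ a :=
  calc b ≤ (a ⊔ c₀) ⊓ (a ⊔ c₁) := le_inf h₀ h₁
    _ = a := by rw [← sup_inf_left, hδ.inf_eq_bot_of_not hc, sup_bot_eq]

theorem exists_isPrime_forall_contact (hδ : IsAdditiveContact δ) {G : Set L} (hG : G.Nonempty)
    (hGinf : InfClosed G) {x : L} (hx : ∀ p ∈ G, δ p x) :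
    ∃ J : Ideal L, J.IsPrime ∧ x ∉ J ∧ ∀ p ∈ G, ∀ q ∉ J, δ p q := by
  have hdisj : Disjoint (PFilter.principal x : Set L) (hδ.notContactIdeal G hG hGinf) := by
    rw [Set.disjoint_left]
    rintro z hxz ⟨p, hp, hpz⟩
    exact hpz (hδ.mono _ _ _ _ (hx p hp) le_rfl hxz)
  obtain ⟨J, hJ, hKJ, hJx⟩ := DistribLattice.prime_ideal_of_disjoint_filter_ideal hdisj
  refine ⟨J, hJ, Set.disjoint_left.mp hJx (PFilter.mem_principal.mpr le_rfl), ?_⟩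
  intro p hp q hq
  by_contra hpq
  exact hq (hKJ ⟨p, hp, hpq⟩)

theorem exists_isPrime_isPrime_of_contact (hδ : IsAdditiveContact δ) {x y : L} (hxy : δ x y) :
    ∃ I J : Ideal L, I.IsPrime ∧ J.IsPrime ∧ x ∉ I ∧ y ∉ J ∧ ∀ p ∉ I, ∀ q ∉ J, δ p q := by
  obtain ⟨I, hI, hxI, hyI⟩ := hδ.exists_isPrime_forall_contact (G := Set.Ici y) ⟨y, le_rfl⟩
    (fun _ ha _ hb => le_inf ha hb) fun p hp => hδ.mono _ _ _ _ (hδ.symm _ _ hxy) hp le_rfl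
  obtain ⟨J, hJ, hyJ, hIJ⟩ := hδ.exists_isPrime_forall_contact (G := (I : Set L)ᶜ) ⟨x, hxI⟩
    hI.infClosed_compl fun p hp => hδ.symm _ _ (hyI y le_rfl p hp)
  exact ⟨I, J, hI, hJ, hxI, hyJ, hIJ⟩

theorem not_of_forall_le_sup (hδ : IsAdditiveContact δ) {ι : Type*} [Fintype ι] {a b : L}
    (c : ι → Fin 2 → L) (hc : ∀ i, ¬ δ (c i 0) (c i 1))
    (hcov : ∀ f : ι → Fin 2,
      b ≤ Finset.univ.sup (fun i => c i (f i)) ∨ a ≤ Finset.univ.sup (fun i => c i (f i))) :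
    ¬ δ b a := by
  intro hba
  obtain ⟨I, J, hI, hJ, hbI, haJ, hIJ⟩ := hδ.exists_isPrime_isPrime_of_contact hba
  choose f hfI hfJ using fun i => hδ.exists_mem_mem_of_not hI hJ hIJ (hc i)
  rcases hcov f with hb | ha
  · exact hbI (I.lower hb (Ideal.finsetSup_mem_iff I |>.mpr fun i _ => hfI i))
  · exact haJ (J.lower ha (Ideal.finsetSup_mem_iff J |>.mpr fun i _ => hfJ i))

end DistribLattice

end IsAdditiveContact

theorem le_iff_le_of_injective_of_map_sup {S L : Type*} [SemilatticeSup S] [SemilatticeSup L]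
    {φ : S → L} (hinj : Function.Injective φ) (hsup : ∀ a b, φ (a ⊔ b) = φ a ⊔ φ b) {a b : S} :
    φ a ≤ φ b ↔ a ≤ b := by
  rw [← sup_eq_right, ← hsup, hinj.eq_iff, sup_eq_right]

theorem embeddable_implies_d1_d2_general {S L : Type*} [SemilatticeSup S] [OrderBot S]
    [DistribLattice L] [OrderBot L]
    (δS : S → S → Prop) (δL : L → L → Prop)
    (hSymL : ∀ a b : L, δL a b → δL b a)
    (hEmpL : ∀ a b : L, δL a b → ⊥ < a ∧ ⊥ < b)
    (hExtL : ∀ a b a₁ b₁ : L, δL a b → a ≤ a₁ → b ≤ b₁ → δL a₁ b₁)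
    (hRefL : ∀ n : L, n ≠ ⊥ → δL n n)
    (hAddL : ∀ a b c : L, δL a (b ⊔ c) → δL a b ∨ δL a c)
    (φ : S → L) (hinj : Function.Injective φ) (hbot : φ ⊥ = ⊥)
    (hsup : ∀ a b : S, φ (a ⊔ b) = φ a ⊔ φ b)
    (hδ : ∀ a b : S, δS a b ↔ δL (φ a) (φ b)) :
    (∀ a b c₀ c₁ : S, b ≤ a ⊔ c₀ → b ≤ a ⊔ c₁ → ¬ δS c₀ c₁ → b ≤ a) ∧
    (∀ (n : ℕ) (a b : S) (c : Fin n → Fin 2 → S),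
      (∀ i, ¬ δS (c i 0) (c i 1)) →
      (∀ f : Fin n → Fin 2,
        b ≤ Finset.univ.sup (fun i => c i (f i)) ∨
        a ≤ Finset.univ.sup (fun i => c i (f i))) →
      ¬ δS b a) := by
  have hδL : IsAdditiveContact δL := ⟨hSymL, hEmpL, hExtL, hRefL, hAddL⟩
  have hle : ∀ {a b : S}, φ a ≤ φ b ↔ a ≤ b := le_iff_le_of_injective_of_map_sup hinj hsup
  have hφsup : ∀ {n : ℕ} (g : Fin n → S),
      φ (Finset.univ.sup g) = Finset.univ.sup fun i => φ (g i) := fun _ =>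
    Finset.apply_sup_eq_sup_comp φ hsup hbot
  refine ⟨fun a b c₀ c₁ h₀ h₁ hc => ?_, fun n a b c hc hcov => ?_⟩
  · rw [← hle, hsup] at h₀ h₁
    exact hle.mp (hδL.le_of_le_sup_of_le_sup h₀ h₁ ((hδ _ _).not.mp hc))
  · rw [hδ]
    refine hδL.not_of_forall_le_sup (fun i ε => φ (c i ε)) (fun i => (hδ _ _).not.mp (hc i))
      fun f => ?_
    simpa only [← hle, hφsup] using hcov f

/-- If a weak contact semilattice embeds into a distributive lattice with
an additive weak contact relation, then it satisfies (D1) and (D2). -/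
theorem embeddable_implies_d1_d2 {S L : Type*} [SemilatticeSup S] [OrderBot S]
    [DistribLattice L] [OrderBot L]
    (δS : S → S → Prop) (δL : L → L → Prop)
    (hSymS : ∀ a b : S, δS a b → δS b a)
    (hEmpS : ∀ a b : S, δS a b → ⊥ < a ∧ ⊥ < b)
    (hExtS : ∀ a b a₁ b₁ : S, δS a b → a ≤ a₁ → b ≤ b₁ → δS a₁ b₁)
    (hRefS : ∀ n : S, n ≠ ⊥ → δS n n)
    (hSymL : ∀ a b : L, δL a b → δL b a)
    (hEmpL : ∀ a b : L, δL a b → ⊥ < a ∧ ⊥ < b)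
    (hExtL : ∀ a b a₁ b₁ : L, δL a b → a ≤ a₁ → b ≤ b₁ → δL a₁ b₁)
    (hRefL : ∀ n : L, n ≠ ⊥ → δL n n)
    (hAddL : ∀ a b c : L, δL a (b ⊔ c) → δL a b ∨ δL a c)
    (φ : S → L) (hinj : Function.Injective φ) (hbot : φ ⊥ = ⊥)
    (hsup : ∀ a b : S, φ (a ⊔ b) = φ a ⊔ φ b)
    (hδ : ∀ a b : S, δS a b ↔ δL (φ a) (φ b)) :
    (∀ a b c₀ c₁ : S, b ≤ a ⊔ c₀ → b ≤ a ⊔ c₁ → ¬ δS c₀ c₁ → b ≤ a) ∧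
    (∀ (n : ℕ) (a b : S) (c : Fin n → Fin 2 → S),
      (∀ i, ¬ δS (c i 0) (c i 1)) →
      (∀ f : Fin n → Fin 2,
        b ≤ Finset.univ.sup (fun i => c i (f i)) ∨
        a ≤ Finset.univ.sup (fun i => c i (f i))) →
      ¬ δS b a) :=
  embeddable_implies_d1_d2_general δS δL hSymL hEmpL hExtL hRefL hAddL φ hinj hbot hsup hδ
end

section
/- Every weak contact semilattice satisfying (D1) and (D2) can be embedded into a Boolean algebra with the overlap contact relation, via the map sending a to the down-complement set {x ∈ S : a ≰ x}, composed with the quotient by the ideal generated by the sets φ(c) ∩ φ(d) for non-contact pairs c, d. -/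
universe u

instance Ideal.Quotient.booleanRing {R : Type*} [BooleanRing R] (I : Ideal R) :
    BooleanRing (R ⧸ I) :=
  { (inferInstance : Ring (R ⧸ I)) with
    isIdempotentElem := fun a => by
      obtain ⟨x, rfl⟩ := Ideal.Quotient.mk_surjective a
      show _ * _ = _
      rw [← (Ideal.Quotient.mk I).map_mul, show x * x = x from BooleanRing.isIdempotentElem x] }

/-!
Write `φ a = {x | a ≰ x} = (Ici a)ᶜ`. Every element of the ideal `I` is contained in a finite
union of generators `φ c ∩ φ d` with `¬ δ c d`. If such a union covers `φ a \ φ b`, then `a ≤ b`: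
by induction on the number of pairs, removing a pair `(c₀, c₁)` gives `a ≤ b ⊔ c₀` and
`a ≤ b ⊔ c₁`, and (D1) concludes. If it covers `φ a ∩ φ b`, then every join of one element from
each pair lies above `a` or `b`, which (D2) forbids when `δ a b`; conversely `¬ δ a b` puts
`φ a ∩ φ b` into `I` by definition. Joins and `⊥` are preserved since `φ (a ⊔ b) = φ a ∪ φ b`
and `φ ⊥ = ∅`.
-/

open Set

namespace AsBoolRing

variable {α : Type*} [BooleanAlgebra α]

def quotientHom (I : Ideal (AsBoolRing α)) : BoundedLatticeHom α (AsBoolAlg (AsBoolRing α ⧸ I)) :=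
  (Ideal.Quotient.mk I).asBoolAlg.comp (OrderIso.asBoolAlgAsBoolRing α).symm

theorem quotientHom_eq_bot_iff {I : Ideal (AsBoolRing α)} {x : α} :
    quotientHom I x = ⊥ ↔ toBoolRing x ∈ I :=
  toBoolAlg_inj.trans Ideal.Quotient.eq_zero_iff_mem

theorem quotientHom_le_iff {I : Ideal (AsBoolRing α)} {x y : α} :
    quotientHom I x ≤ quotientHom I y ↔ toBoolRing (x \ y) ∈ I := by
  rw [← quotientHom_eq_bot_iff, map_sdiff', sdiff_eq_bot_iff]

def idealIic (u : α) : Ideal (AsBoolRing α) where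
  carrier := {z | ofBoolRing z ≤ u}
  add_mem' hz hw := by
    simp only [mem_ofPred_eq, ofBoolRing_add] at *
    exact symmDiff_le_sup.trans (sup_le hz hw)
  zero_mem' := by simp
  smul_mem' _ _ hz := by
    simp only [mem_ofPred_eq, smul_eq_mul, ofBoolRing_mul] at *
    exact inf_le_of_right_le hz

theorem exists_le_sup_of_mem_span {s : Set (AsBoolRing α)} {x : α}
    (hx : toBoolRing x ∈ Ideal.span s) :
    ∃ (n : ℕ) (g : Fin n → s), x ≤ Finset.univ.sup fun i => ofBoolRing (g i : AsBoolRing α) := by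
  obtain ⟨n, r, g, hrg⟩ := Submodule.mem_span_set'.1 hx
  refine ⟨n, g, ?_⟩
  show toBoolRing x ∈ idealIic _
  exact hrg ▸ Ideal.sum_mem _ fun i _ => Ideal.mul_mem_left _ _ <|
    Finset.le_sup (f := fun i => ofBoolRing (g i : AsBoolRing α)) (Finset.mem_univ i)

end AsBoolRing

section ContactSemilattice

variable {S : Type*} [SemilatticeSup S] (δ : S → S → Prop)

def nonContactIdeal : Ideal (AsBoolRing (Set S)) :=
  Ideal.span {z | ∃ c d : S, ¬ δ c d ∧ z = toBoolRing ((Ici c)ᶜ ∩ (Ici d)ᶜ)}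

def downComplEmbedding [OrderBot S] :
    SupBotHom S (AsBoolAlg (AsBoolRing (Set S) ⧸ nonContactIdeal δ)) :=
  (AsBoolRing.quotientHom (nonContactIdeal δ)).toSupBotHom.comp
    { toFun := fun a => (Ici a)ᶜ
      map_sup' := fun a b => by rw [← Ici_inter_Ici, compl_inter]; rfl
      map_bot' := compl_eq_bot.2 Ici_bot }

variable {δ}

theorem exists_cover_of_mem_nonContactIdeal {U : Set S}
    (hU : toBoolRing U ∈ nonContactIdeal δ) :
    ∃ (n : ℕ) (c : Fin n → Fin 2 → S), (∀ i, ¬ δ (c i 0) (c i 1)) ∧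
      U ⊆ ⋃ i, ⋂ j, (Ici (c i j))ᶜ := by
  obtain ⟨n, g, hUg⟩ := AsBoolRing.exists_le_sup_of_mem_span hU
  choose c d hcd hg using fun i => (g i).2
  refine ⟨n, fun i => ![c i, d i], hcd, hUg.trans (Finset.sup_le fun i _ => ?_)⟩
  rw [hg, ofBoolRing_toBoolRing]
  rintro x ⟨hc, hd⟩
  exact mem_iUnion_of_mem i (mem_iInter.2 (Fin.forall_fin_two.2 ⟨hc, hd⟩))

theorem le_of_Ici_diff_subset
    (hD1 : ∀ a b c₀ c₁ : S, b ≤ a ⊔ c₀ → b ≤ a ⊔ c₁ → ¬ δ c₀ c₁ → b ≤ a) :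
    ∀ {n : ℕ} (c : Fin n → Fin 2 → S), (∀ i, ¬ δ (c i 0) (c i 1)) →
      ∀ {a b : S}, Ici b \ Ici a ⊆ ⋃ i, ⋂ j, (Ici (c i j))ᶜ → a ≤ b
  | 0, _, _, a, b, h => by
    by_contra hab
    simpa using h ⟨le_refl b, hab⟩
  | n + 1, c, hc, a, b, h => by
    have step : ∀ j, a ≤ b ⊔ c 0 j := fun j =>
      le_of_Ici_diff_subset hD1 (fun i => c i.succ) (fun i => hc i.succ) fun x ⟨hbx, hax⟩ => by
        have hx := h ⟨le_sup_left.trans hbx, hax⟩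
        rw [iUnion_fin_add_one_eq_iUnion_succ] at hx
        exact hx.resolve_left fun h0 => mem_iInter.1 h0 j (le_sup_right.trans hbx)
    exact hD1 b a (c 0 0) (c 0 1) (step 0) (step 1) (hc 0)

theorem not_contact_of_Ici_compl_inter_subset [OrderBot S]
    (hD2 : ∀ (n : ℕ) (a b : S) (c : Fin n → Fin 2 → S),
      (∀ i, ¬ δ (c i 0) (c i 1)) →
      (∀ f : Fin n → Fin 2,
        b ≤ Finset.univ.sup (fun i => c i (f i)) ∨
        a ≤ Finset.univ.sup (fun i => c i (f i))) →
      ¬ δ b a)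
    {n : ℕ} (c : Fin n → Fin 2 → S) (hc : ∀ i, ¬ δ (c i 0) (c i 1)) {a b : S}
    (h : (Ici a)ᶜ ∩ (Ici b)ᶜ ⊆ ⋃ i, ⋂ j, (Ici (c i j))ᶜ) : ¬ δ a b := by
  refine hD2 n b a c hc fun f => ?_
  by_contra! hab
  obtain ⟨i, hi⟩ := mem_iUnion.1 (h ⟨hab.1, hab.2⟩)
  exact mem_iInter.1 hi (f i) (Finset.le_sup (f := fun i => c i (f i)) (Finset.mem_univ i))

variable [OrderBot S]

theorem le_of_downComplEmbedding_le
    (hD1 : ∀ a b c₀ c₁ : S, b ≤ a ⊔ c₀ → b ≤ a ⊔ c₁ → ¬ δ c₀ c₁ → b ≤ a) {a b : S}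
    (h : downComplEmbedding δ a ≤ downComplEmbedding δ b) : a ≤ b := by
  change AsBoolRing.quotientHom _ (Ici a)ᶜ ≤ AsBoolRing.quotientHom _ (Ici b)ᶜ at h
  rw [AsBoolRing.quotientHom_le_iff, compl_sdiff_compl] at h
  obtain ⟨n, c, hc, hcover⟩ := exists_cover_of_mem_nonContactIdeal h
  exact le_of_Ici_diff_subset hD1 c hc hcover

theorem contact_iff_downComplEmbedding_inf_ne_bot
    (hD2 : ∀ (n : ℕ) (a b : S) (c : Fin n → Fin 2 → S),
      (∀ i, ¬ δ (c i 0) (c i 1)) →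
      (∀ f : Fin n → Fin 2,
        b ≤ Finset.univ.sup (fun i => c i (f i)) ∨
        a ≤ Finset.univ.sup (fun i => c i (f i))) →
      ¬ δ b a) (a b : S) :
    δ a b ↔ downComplEmbedding δ a ⊓ downComplEmbedding δ b ≠ ⊥ := by
  change δ a b ↔ AsBoolRing.quotientHom _ (Ici a)ᶜ ⊓ AsBoolRing.quotientHom _ (Ici b)ᶜ ≠ ⊥
  rw [← map_inf, Ne, AsBoolRing.quotientHom_eq_bot_iff]
  refine ⟨fun hab hmem => ?_, not_imp_comm.1 fun hab => Ideal.subset_span ⟨a, b, hab, rfl⟩⟩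
  obtain ⟨n, c, hc, hcover⟩ := exists_cover_of_mem_nonContactIdeal hmem
  exact not_contact_of_Ici_compl_inter_subset hD2 c hc hcover hab

end ContactSemilattice

theorem embedding_via_downcomplement_general {S : Type u} [SemilatticeSup S] [OrderBot S]
    (δ : S → S → Prop)
    (hD1 : ∀ a b c₀ c₁ : S, b ≤ a ⊔ c₀ → b ≤ a ⊔ c₁ → ¬ δ c₀ c₁ → b ≤ a)
    (hD2 : ∀ (n : ℕ) (a b : S) (c : Fin n → Fin 2 → S),
      (∀ i, ¬ δ (c i 0) (c i 1)) →
      (∀ f : Fin n → Fin 2,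
        b ≤ Finset.univ.sup (fun i => c i (f i)) ∨
        a ≤ Finset.univ.sup (fun i => c i (f i))) →
      ¬ δ b a) :
    let φ : S → Set S := fun a => {x : S | ¬ a ≤ x}
    let I : Ideal (AsBoolRing (Set S)) :=
      Ideal.span {z : AsBoolRing (Set S) |
        ∃ c d : S, ¬ δ c d ∧ z = toBoolRing (φ c ∩ φ d)}
    let κ : S → AsBoolAlg (AsBoolRing (Set S) ⧸ I) :=
      fun a => toBoolAlg (Ideal.Quotient.mk I (toBoolRing (φ a)))
    Function.Injective κ ∧ κ ⊥ = ⊥ ∧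
    (∀ a b : S, κ (a ⊔ b) = κ a ⊔ κ b) ∧
    (∀ a b : S, δ a b ↔ κ a ⊓ κ b ≠ ⊥) :=
  ⟨fun _ _ h => le_antisymm (le_of_downComplEmbedding_le hD1 h.le)
      (le_of_downComplEmbedding_le hD1 h.ge),
    (downComplEmbedding δ).map_bot', (downComplEmbedding δ).map_sup',
    contact_iff_downComplEmbedding_inf_ne_bot hD2⟩

/-- Every weak contact semilattice `S` satisfying (D1) and (D2) embeds into
a Boolean algebra with the overlap contact relation, via `a ↦ φ(a) = {x ∈ S : a ≰ x}`
composed with the quotient of the Boolean algebra `𝒫(S)` by the ideal generated by the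
sets `φ(c) ∩ φ(d)` for pairs `c, d` that are not in contact. -/
theorem embedding_via_downcomplement {S : Type u} [SemilatticeSup S] [OrderBot S]
    (δ : S → S → Prop)
    (hSym : ∀ a b : S, δ a b → δ b a)
    (hEmp : ∀ a b : S, δ a b → ⊥ < a ∧ ⊥ < b)
    (hExt : ∀ a b a₁ b₁ : S, δ a b → a ≤ a₁ → b ≤ b₁ → δ a₁ b₁)
    (hRef : ∀ n : S, n ≠ ⊥ → δ n n)
    (hD1 : ∀ a b c₀ c₁ : S, b ≤ a ⊔ c₀ → b ≤ a ⊔ c₁ → ¬ δ c₀ c₁ → b ≤ a)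
    (hD2 : ∀ (n : ℕ) (a b : S) (c : Fin n → Fin 2 → S),
      (∀ i, ¬ δ (c i 0) (c i 1)) →
      (∀ f : Fin n → Fin 2,
        b ≤ Finset.univ.sup (fun i => c i (f i)) ∨
        a ≤ Finset.univ.sup (fun i => c i (f i))) →
      ¬ δ b a) :
    let φ : S → Set S := fun a => {x : S | ¬ a ≤ x}
    let I : Ideal (AsBoolRing (Set S)) :=
      Ideal.span {z : AsBoolRing (Set S) |
        ∃ c d : S, ¬ δ c d ∧ z = toBoolRing (φ c ∩ φ d)}
    let κ : S → AsBoolAlg (AsBoolRing (Set S) ⧸ I) :=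
      fun a => toBoolAlg (Ideal.Quotient.mk I (toBoolRing (φ a)))
    Function.Injective κ ∧ κ ⊥ = ⊥ ∧
    (∀ a b : S, κ (a ⊔ b) = κ a ⊔ κ b) ∧
    (∀ a b : S, δ a b ↔ κ a ⊓ κ b ≠ ⊥) :=
  embedding_via_downcomplement_general δ hD1 hD2
end

section
/- For a weak contact semilattice S, the following are equivalent: (1) S embeds into a Boolean algebra with overlap contact; (2) S embeds into a distributive lattice with additive contact; (3) S satisfies conditions (D1) and (D2). -/
universe u

/-
(1) ⇒ (2): overlap contact on a Boolean algebra is an additive weak contact.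

(2) ⇒ (3) is proved inside the distributive lattice and pulled back along the embedding.
(D1) is distributivity: `b ≤ a ⊔ (c₀ ⊓ c₁)`, and `c₀ ⊓ c₁ = ⊥` since otherwise reflexivity would
put `c₀` and `c₁` in contact. For (D2), assume `δ b a`. Additivity shrinks `b`, then `a`, to
`b'`, `a'` still in contact such that for every `f` one of them lies below some `c i (f i)`.
Taking `f i = 1` exactly when `c i 0` lies above `a'` or `b'` yields an `i` for which both
`c i 0` and `c i 1` lie above `a'` or `b'`, so they are in contact.

(3) ⇒ (1): send `a` to the set of selections `σ` (one member of each non-contact pair) no finite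
join of whose members lies above `a`. For every finite set of pairs, (D1) yields a selection
separating `a` from `b` when `a ≰ b`, and (D2) one avoiding both `a` and `b` when `δ a b`;
compactness of the Cantor space of selections turns these into global selections.
-/

structure IsWeakContact {L : Type*} [Preorder L] [OrderBot L] (δ : L → L → Prop) : Prop where
  symm : ∀ a b, δ a b → δ b a
  bot_lt : ∀ a b, δ a b → ⊥ < a ∧ ⊥ < b
  mono : ∀ a b a₁ b₁, δ a b → a ≤ a₁ → b ≤ b₁ → δ a₁ b₁
  refl : ∀ a, a ≠ ⊥ → δ a a

structure IsAdditiveContact_s12 {L : Type*} [SemilatticeSup L] [OrderBot L] (δ : L → L → Prop) : Prop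
    extends IsWeakContact δ where
  sup_right : ∀ a b c, δ a (b ⊔ c) → δ a b ∨ δ a c

section Conditions

variable {S : Type*} [SemilatticeSup S] [OrderBot S]

def SatisfiesD1 (δ : S → S → Prop) : Prop :=
  ∀ a b c₀ c₁ : S, b ≤ a ⊔ c₀ → b ≤ a ⊔ c₁ → ¬ δ c₀ c₁ → b ≤ a

def SatisfiesD2 (δ : S → S → Prop) : Prop :=
  ∀ (n : ℕ) (a b : S) (c : Fin n → Fin 2 → S),
    (∀ i, ¬ δ (c i 0) (c i 1)) →
    (∀ f : Fin n → Fin 2,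
      b ≤ Finset.univ.sup (fun i => c i (f i)) ∨ a ≤ Finset.univ.sup (fun i => c i (f i))) →
    ¬ δ b a

end Conditions

section Lattice

variable {L : Type*} [DistribLattice L] [OrderBot L] {δ : L → L → Prop}

theorem isAdditiveContact_inf_ne_bot : IsAdditiveContact_s12 fun x y : L => x ⊓ y ≠ ⊥ where
  symm x y h := by rwa [inf_comm]
  bot_lt x y h := ⟨bot_lt_iff_ne_bot.2 fun hx => h (by simp [hx]),
    bot_lt_iff_ne_bot.2 fun hy => h (by simp [hy])⟩
  mono x y x₁ y₁ h hx hy h₁ := h (le_bot_iff.1 (h₁ ▸ inf_le_inf hx hy))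
  refl x hx := by rwa [inf_idem]
  sup_right x y z h := by
    by_contra! hyz
    exact h (by rw [inf_sup_left, hyz.1, hyz.2, sup_idem])

theorem IsWeakContact.satisfiesD1 (hδ : IsWeakContact δ) : SatisfiesD1 δ := by
  intro a b c₀ c₁ h₀ h₁ hc
  have hb : b ≤ a ⊔ c₀ ⊓ c₁ := sup_inf_left a c₀ c₁ ▸ le_inf h₀ h₁
  by_cases hbot : c₀ ⊓ c₁ = ⊥
  · rwa [hbot, sup_bot_eq] at hb
  · exact (hc (hδ.mono _ _ _ _ (hδ.refl _ hbot) inf_le_left inf_le_right)).elim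

theorem IsWeakContact.rel_of_le_or_le (hδ : IsWeakContact δ) {u v p q : L} (huv : δ u v)
    (hp : u ≤ p ∨ v ≤ p) (hq : u ≤ q ∨ v ≤ q) : δ p q := by
  have hu := hδ.refl u (hδ.bot_lt u v huv).1.ne'
  have hv := hδ.refl v (hδ.bot_lt u v huv).2.ne'
  rcases hp with hp | hp <;> rcases hq with hq | hq
  · exact hδ.mono _ _ _ _ hu hp hq
  · exact hδ.mono _ _ _ _ huv hp hq
  · exact hδ.mono _ _ _ _ (hδ.symm _ _ huv) hp hq
  · exact hδ.mono _ _ _ _ hv hp hq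

theorem IsAdditiveContact_s12.exists_rel_finset_sup {ι : Type*} (hδ : IsAdditiveContact_s12 δ) {x : L}
    {s : Finset ι} {v : ι → L} (h : δ x (s.sup v)) : ∃ i ∈ s, δ x (v i) := by
  classical
  induction s using Finset.induction_on with
  | empty => exact absurd (hδ.bot_lt _ _ h).2 (lt_irrefl ⊥)
  | insert i s _ ih =>
    rw [Finset.sup_insert] at h
    rcases hδ.sup_right _ _ _ h with h | h
    · exact ⟨i, Finset.mem_insert_self i s, h⟩
    · obtain ⟨j, hj, h⟩ := ih h
      exact ⟨j, Finset.mem_insert_of_mem hj, h⟩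

theorem IsAdditiveContact_s12.exists_rel_inf_of_le_finset_sup {ι : Type*} (hδ : IsAdditiveContact_s12 δ)
    {x z : L} {s : Finset ι} {v : ι → L} (hxz : δ x z) (hz : z ≤ s.sup v) :
    ∃ i ∈ s, δ x (z ⊓ v i) := by
  rw [← inf_eq_left.2 hz, Finset.sup_inf_distrib_left] at hxz
  exact hδ.exists_rel_finset_sup hxz

theorem IsAdditiveContact_s12.exists_rel_le_forall_le {κ ι : Type*} (hδ : IsAdditiveContact_s12 δ)
    {x z : L} (K : Finset κ) {s : κ → Finset ι} {v : κ → ι → L} (hxz : δ x z)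
    (hz : ∀ k ∈ K, z ≤ (s k).sup (v k)) :
    ∃ z' ≤ z, δ x z' ∧ ∀ k ∈ K, ∃ i ∈ s k, z' ≤ v k i := by
  classical
  induction K using Finset.induction_on generalizing z with
  | empty => exact ⟨z, le_rfl, hxz, by simp⟩
  | insert k K _ ih =>
    obtain ⟨i, hi, hxzi⟩ :=
      hδ.exists_rel_inf_of_le_finset_sup hxz (hz k (Finset.mem_insert_self k K))
    obtain ⟨z', hz', hxz', hK⟩ :=
      ih hxzi fun k' hk' => inf_le_left.trans (hz k' (Finset.mem_insert_of_mem hk'))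
    exact ⟨z', hz'.trans inf_le_left, hxz',
      (Finset.forall_mem_insert _ _ _).2 ⟨⟨i, hi, hz'.trans inf_le_right⟩, hK⟩⟩

theorem exists_and_of_forall_exists_fin_two {ι : Type*} {P : ι → Fin 2 → Prop}
    (h : ∀ f : ι → Fin 2, ∃ i, P i (f i)) : ∃ i, P i 0 ∧ P i 1 := by
  classical
  by_contra! hP
  obtain ⟨i, hi⟩ := h fun i => if P i 0 then 1 else 0
  by_cases h0 : P i 0
  · rw [if_pos h0] at hi
    exact hP i h0 hi
  · rw [if_neg h0] at hi
    exact h0 hi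

theorem IsAdditiveContact_s12.satisfiesD2 (hδ : IsAdditiveContact_s12 δ) : SatisfiesD2 δ := by
  classical
  intro n a b c hc hcover hba
  set s : (Fin n → Fin 2) → L := fun f => Finset.univ.sup fun i => c i (f i)
  obtain ⟨b', -, hab', hb'⟩ := hδ.exists_rel_le_forall_le (Finset.univ.filter fun f => b ≤ s f)
    (s := fun _ => Finset.univ) (v := fun f i => c i (f i)) (hδ.symm _ _ hba) (by simp [s])
  obtain ⟨a', -, hb'a', ha'⟩ := hδ.exists_rel_le_forall_le (Finset.univ.filter fun f => a ≤ s f)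
    (s := fun _ => Finset.univ) (v := fun f i => c i (f i)) (hδ.symm _ _ hab') (by simp [s])
  obtain ⟨i, h₀, h₁⟩ := exists_and_of_forall_exists_fin_two
    (P := fun i j => b' ≤ c i j ∨ a' ≤ c i j) fun f => by
      rcases hcover f with hf | hf
      · obtain ⟨i, -, hi⟩ := hb' f (by simpa using hf)
        exact ⟨i, Or.inl hi⟩
      · obtain ⟨i, -, hi⟩ := ha' f (by simpa using hf)
        exact ⟨i, Or.inr hi⟩
  exact hc i (hδ.rel_of_le_or_le hb'a' h₀ h₁)

end Lattice

section Embedding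

variable {S L : Type*} [SemilatticeSup S] [OrderBot S] [SemilatticeSup L] [OrderBot L]
  {δ : S → S → Prop} {δL : L → L → Prop} (φ : SupBotHom S L)

theorem SupBotHom.map_le_map_iff_of_injective (hφ : Function.Injective φ) {a b : S} :
    φ a ≤ φ b ↔ a ≤ b := by
  rw [← sup_eq_right, ← map_sup, hφ.eq_iff, sup_eq_right]

variable {φ}

theorem SatisfiesD1.comap (hD1 : SatisfiesD1 δL) (hφ : Function.Injective φ)
    (hδ : ∀ a b, δ a b ↔ δL (φ a) (φ b)) : SatisfiesD1 δ := by
  intro a b c₀ c₁ h₀ h₁ hc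
  rw [← φ.map_le_map_iff_of_injective hφ]
  refine hD1 _ _ (φ c₀) (φ c₁) ?_ ?_ (mt (hδ _ _).2 hc)
  · simpa only [map_sup] using OrderHomClass.mono φ h₀
  · simpa only [map_sup] using OrderHomClass.mono φ h₁

theorem SatisfiesD2.comap (hD2 : SatisfiesD2 δL) (hδ : ∀ a b, δ a b ↔ δL (φ a) (φ b)) :
    SatisfiesD2 δ := by
  intro n a b c hc hcover hba
  refine hD2 n (φ a) (φ b) (fun i j => φ (c i j)) (fun i => mt (hδ _ _).2 (hc i)) (fun f => ?_)
    ((hδ b a).1 hba)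
  simpa only [map_finset_sup, Function.comp_def] using
    (hcover f).imp (OrderHomClass.mono φ ·) (OrderHomClass.mono φ ·)

end Embedding

theorem isClosed_setOf_finset_sup_apply {ι α β : Type*} [TopologicalSpace α] [DiscreteTopology α]
    [SemilatticeSup β] [OrderBot β] (T : Finset ι) (g : ι → α → β) (P : β → Prop) :
    IsClosed {σ : ι → α | P (T.sup fun i => g i (σ i))} := by
  have hF : IsLocallyConstant fun σ : ι → α => T.sup fun i => g i (σ i) := by
    have hfactor : (fun σ : ι → α => T.sup fun i => g i (σ i)) =
        (fun τ : T → α => T.attach.sup fun i => g i (τ i)) ∘ fun σ i => σ i := by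
      ext σ
      exact (Finset.sup_attach T fun i => g i (σ i)).symm
    rw [hfactor]
    exact (IsLocallyConstant.of_discrete _).comp_continuous
      (continuous_pi fun i => continuous_apply _)
  exact isOpen_compl_iff.1 (hF {y | ¬ P y})

theorem nonempty_iInter_of_antitone_isClosed {X ι : Type*} [TopologicalSpace X] [CompactSpace X]
    [Preorder ι] [IsDirectedOrder ι] [Nonempty ι] {t : ι → Set X} (ht : Antitone t)
    (hne : ∀ i, (t i).Nonempty) (hcl : ∀ i, IsClosed (t i)) : (⋂ i, t i).Nonempty :=
  IsCompact.nonempty_iInter_of_directed_nonempty_isCompact_isClosed t ht.directed_ge hne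
    (fun i => (hcl i).isCompact) hcl

section Representation

variable {S : Type*} [SemilatticeSup S] [OrderBot S] {δ : S → S → Prop}

variable (δ) in
def NonContactPair : Type _ := {p : S × S // ¬ δ p.1 p.2}

def NonContactPair.pick (p : NonContactPair δ) : Fin 2 → S := ![p.1.1, p.1.2]

def reprSet (δ : S → S → Prop) (a : S) : Set (NonContactPair δ → Fin 2) :=
  {σ | ∀ T : Finset (NonContactPair δ), ¬ a ≤ T.sup fun p => p.pick (σ p)}

theorem reprSet_bot : reprSet δ ⊥ = ∅ :=
  Set.eq_empty_of_forall_notMem fun _ hσ => hσ ∅ bot_le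

theorem reprSet_sup (a b : S) : reprSet δ (a ⊔ b) = reprSet δ a ∪ reprSet δ b := by
  classical
  ext σ
  simp only [reprSet, Set.mem_ofPred_eq, Set.mem_union]
  constructor
  · intro h
    by_contra! ⟨⟨T₁, h₁⟩, ⟨T₂, h₂⟩⟩
    exact h (T₁ ∪ T₂) (sup_le (h₁.trans (Finset.sup_mono Finset.subset_union_left))
      (h₂.trans (Finset.sup_mono Finset.subset_union_right)))
  · rintro (h | h) T hT
    · exact h T (le_sup_left.trans hT)
    · exact h T (le_sup_right.trans hT)

theorem rel_of_mem_reprSet {a b : S} {σ : NonContactPair δ → Fin 2} (ha : σ ∈ reprSet δ a)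
    (hb : σ ∈ reprSet δ b) : δ a b := by
  by_contra h
  let p : NonContactPair δ := ⟨(a, b), h⟩
  have hcover : ∀ j, a ≤ p.pick j ∨ b ≤ p.pick j :=
    Fin.forall_fin_two.2 ⟨Or.inl le_rfl, Or.inr le_rfl⟩
  rcases hcover (σ p) with hp | hp
  · exact ha {p} (by rwa [Finset.sup_singleton])
  · exact hb {p} (by rwa [Finset.sup_singleton])

theorem SatisfiesD2.finset (hD2 : SatisfiesD2 δ) {ι : Type*} (T : Finset ι) (a b : S)
    (c : ι → Fin 2 → S) (hc : ∀ i ∈ T, ¬ δ (c i 0) (c i 1))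
    (hcover : ∀ f : ι → Fin 2, b ≤ T.sup (fun i => c i (f i)) ∨ a ≤ T.sup (fun i => c i (f i))) :
    ¬ δ b a := by
  classical
  let e := T.equivFin
  refine hD2 T.card a b (fun k => c (e.symm k)) (fun k => hc _ (e.symm k).2) fun f => ?_
  let g : ι → Fin 2 := fun i => if hi : i ∈ T then f (e ⟨i, hi⟩) else 0
  have hsup : T.sup (fun i => c i (g i)) = Finset.univ.sup fun k => c (e.symm k) (f k) := by
    rw [← Finset.map_univ_equiv e, Finset.sup_map, ← Finset.sup_attach, Finset.univ_eq_attach]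
    simp [g, Function.comp_def]
  simpa only [hsup] using hcover g

theorem SatisfiesD2.not_rel_bot_left (hD2 : SatisfiesD2 δ) (b : S) : ¬ δ ⊥ b :=
  hD2 0 b ⊥ Fin.elim0 (fun i => i.elim0) fun _ => Or.inl bot_le

theorem SatisfiesD2.exists_selection (hD2 : SatisfiesD2 δ) {a b : S} (hab : δ a b)
    (T : Finset (NonContactPair δ)) :
    ∃ σ : NonContactPair δ → Fin 2,
      ¬ a ≤ (T.sup fun p => p.pick (σ p)) ∧ ¬ b ≤ T.sup fun p => p.pick (σ p) := by
  by_contra! h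
  exact hD2.finset T b a NonContactPair.pick (fun p _ => p.2)
    (fun σ => (em _).elim Or.inl fun ha => Or.inr (h σ ha)) hab

theorem SatisfiesD2.reprSet_inter_nonempty (hD2 : SatisfiesD2 δ) {a b : S} (hab : δ a b) :
    (reprSet δ a ∩ reprSet δ b).Nonempty := by
  let t (T : Finset (NonContactPair δ)) : Set (NonContactPair δ → Fin 2) :=
    {σ | ¬ a ≤ (T.sup fun p => p.pick (σ p)) ∧ ¬ b ≤ T.sup fun p => p.pick (σ p)}
  have ht : Antitone t := fun T T' hT σ ⟨ha, hb⟩ =>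
    ⟨fun h => ha (h.trans (Finset.sup_mono hT)), fun h => hb (h.trans (Finset.sup_mono hT))⟩
  obtain ⟨σ, hσ⟩ := nonempty_iInter_of_antitone_isClosed ht (hD2.exists_selection hab)
    fun T => isClosed_setOf_finset_sup_apply T NonContactPair.pick fun s => ¬ a ≤ s ∧ ¬ b ≤ s
  rw [Set.mem_iInter] at hσ
  exact ⟨σ, fun T => (hσ T).1, fun T => (hσ T).2⟩

theorem SatisfiesD1.exists_selection (hD1 : SatisfiesD1 δ) {a : S}
    (T : Finset (NonContactPair δ)) {x : S} (hx : ¬ a ≤ x) :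
    ∃ σ : NonContactPair δ → Fin 2, ¬ a ≤ x ⊔ T.sup fun p => p.pick (σ p) := by
  classical
  induction T using Finset.induction_on generalizing x with
  | empty => exact ⟨fun _ => 0, by simpa using hx⟩
  | insert p T hp ih =>
    obtain ⟨j, hj⟩ : ∃ j, ¬ a ≤ x ⊔ p.pick j := by
      by_contra! h
      exact hx (hD1 x a _ _ (h 0) (h 1) p.2)
    obtain ⟨σ, hσ⟩ := ih hj
    refine ⟨Function.update σ p j, ?_⟩
    have hT : (T.sup fun q => q.pick (Function.update σ p j q)) = T.sup fun q => q.pick (σ q) :=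
      Finset.sup_congr rfl fun q hq => by rw [Function.update_of_ne (ne_of_mem_of_not_mem hq hp)]
    rwa [Finset.sup_insert, Function.update_self, hT, ← sup_assoc]

theorem SatisfiesD1.exists_mem_reprSet_diff (hD1 : SatisfiesD1 δ) (hbot : ∀ b, ¬ δ ⊥ b)
    {a b : S} (hab : ¬ a ≤ b) : ∃ σ ∈ reprSet δ a, σ ∉ reprSet δ b := by
  classical
  let pb : NonContactPair δ := ⟨(⊥, b), hbot b⟩
  let t (T : Finset (NonContactPair δ)) : Set (NonContactPair δ → Fin 2) :=
    {σ | σ pb = 1} ∩ {σ | ¬ a ≤ T.sup fun p => p.pick (σ p)}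
  have ht : Antitone t := fun T T' hT σ ⟨hpb, ha⟩ =>
    ⟨hpb, fun h => ha (h.trans (Finset.sup_mono hT))⟩
  have hne (T) : (t T).Nonempty := by
    obtain ⟨σ, hσ⟩ := hD1.exists_selection T hab
    refine ⟨Function.update σ pb 1, Function.update_self .., fun h => hσ (h.trans ?_)⟩
    refine Finset.sup_le fun p hp => ?_
    by_cases hpb : p = pb
    · subst hpb
      rw [Function.update_self]
      exact le_sup_left
    · rw [Function.update_of_ne hpb]
      exact le_sup_of_le_right (Finset.le_sup (f := fun p => p.pick (σ p)) hp)
  have hcl (T) : IsClosed (t T) :=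
    (isClosed_eq (continuous_apply pb) continuous_const).inter
      (isClosed_setOf_finset_sup_apply T NonContactPair.pick fun s => ¬ a ≤ s)
  obtain ⟨σ, hσ⟩ := nonempty_iInter_of_antitone_isClosed ht hne hcl
  rw [Set.mem_iInter] at hσ
  refine ⟨σ, fun T => (hσ T).2, fun h => h {pb} ?_⟩
  rw [Finset.sup_singleton, (hσ ∅).1]
  rfl

theorem reprSet_injective (hD1 : SatisfiesD1 δ) (hD2 : SatisfiesD2 δ) :
    Function.Injective (reprSet δ) := by
  have hle {a b : S} (h : reprSet δ a ⊆ reprSet δ b) : a ≤ b := by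
    by_contra hab
    obtain ⟨σ, ha, hb⟩ := hD1.exists_mem_reprSet_diff hD2.not_rel_bot_left hab
    exact hb (h ha)
  exact fun a b h => le_antisymm (hle h.le) (hle h.ge)

theorem reprSet_inter_nonempty_iff (hD2 : SatisfiesD2 δ) {a b : S} :
    (reprSet δ a ∩ reprSet δ b).Nonempty ↔ δ a b :=
  ⟨fun ⟨_, ha, hb⟩ => rel_of_mem_reprSet ha hb, hD2.reprSet_inter_nonempty⟩

end Representation

theorem contact_semilattice_tfae_general {S : Type u} [SemilatticeSup S] [OrderBot S]
    (δ : S → S → Prop) :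
    List.TFAE
      [ -- (1) embedding into a Boolean algebra with overlap contact
        (∃ (B : Type u) (_ : BooleanAlgebra B) (φ : S → B),
          Function.Injective φ ∧ φ ⊥ = ⊥ ∧
          (∀ a b : S, φ (a ⊔ b) = φ a ⊔ φ b) ∧
          (∀ a b : S, δ a b ↔ φ a ⊓ φ b ≠ ⊥)),
        -- (2) embedding into a distributive lattice with an additive weak contact
        (∃ (L : Type u) (_ : DistribLattice L) (_ : OrderBot L)
          (δL : L → L → Prop) (φ : S → L),
          (∀ a b : L, δL a b → δL b a) ∧
          (∀ a b : L, δL a b → ⊥ < a ∧ ⊥ < b) ∧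
          (∀ a b a₁ b₁ : L, δL a b → a ≤ a₁ → b ≤ b₁ → δL a₁ b₁) ∧
          (∀ n : L, n ≠ ⊥ → δL n n) ∧
          (∀ a b c : L, δL a (b ⊔ c) → δL a b ∨ δL a c) ∧
          Function.Injective φ ∧ φ ⊥ = ⊥ ∧
          (∀ a b : S, φ (a ⊔ b) = φ a ⊔ φ b) ∧
          (∀ a b : S, δ a b ↔ δL (φ a) (φ b))),
        -- (3) (D1) and (D2)
        ((∀ a b c₀ c₁ : S, b ≤ a ⊔ c₀ → b ≤ a ⊔ c₁ → ¬ δ c₀ c₁ → b ≤ a) ∧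
          (∀ (n : ℕ) (a b : S) (c : Fin n → Fin 2 → S),
            (∀ i, ¬ δ (c i 0) (c i 1)) →
            (∀ f : Fin n → Fin 2,
              b ≤ Finset.univ.sup (fun i => c i (f i)) ∨
              a ≤ Finset.univ.sup (fun i => c i (f i))) →
            ¬ δ b a)) ] := by
  tfae_have 1 → 2
  | ⟨B, _, φ, hinj, hbot, hsup, hδ⟩ =>
    have h := isAdditiveContact_inf_ne_bot (L := B)
    ⟨B, inferInstance, inferInstance, _, φ, h.symm, h.bot_lt, h.mono, h.refl, h.sup_right,
      hinj, hbot, hsup, hδ⟩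
  tfae_have 2 → 3
  | ⟨L, _, _, δL, φ, hsymm, hbot_lt, hmono, hrefl, hadd, hinj, hbot, hsup, hδ⟩ =>
    have hL : IsAdditiveContact_s12 δL := ⟨⟨hsymm, hbot_lt, hmono, hrefl⟩, hadd⟩
    let ψ : SupBotHom S L := ⟨⟨φ, hsup⟩, hbot⟩
    ⟨hL.satisfiesD1.comap (φ := ψ) hinj hδ, hL.satisfiesD2.comap (φ := ψ) hδ⟩
  tfae_have 3 → 1
  | ⟨hD1, hD2⟩ =>
    ⟨_, inferInstance, reprSet δ, reprSet_injective hD1 hD2, reprSet_bot, reprSet_sup,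
      fun _ _ => (reprSet_inter_nonempty_iff hD2).symm.trans Set.nonempty_iff_ne_empty⟩
  tfae_finish

/-- For a weak contact semilattice `S`, the following are equivalent:
(1) `S` embeds into a Boolean algebra with overlap contact;
(2) `S` embeds into a distributive lattice with an additive weak contact relation;
(3) `S` satisfies conditions (D1) and (D2). -/
theorem contact_semilattice_tfae {S : Type u} [SemilatticeSup S] [OrderBot S]
    (δ : S → S → Prop)
    (hSym : ∀ a b : S, δ a b → δ b a)
    (hEmp : ∀ a b : S, δ a b → ⊥ < a ∧ ⊥ < b)
    (hExt : ∀ a b a₁ b₁ : S, δ a b → a ≤ a₁ → b ≤ b₁ → δ a₁ b₁)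
    (hRef : ∀ n : S, n ≠ ⊥ → δ n n) :
    List.TFAE
      [ -- (1) embedding into a Boolean algebra with overlap contact
        (∃ (B : Type u) (_ : BooleanAlgebra B) (φ : S → B),
          Function.Injective φ ∧ φ ⊥ = ⊥ ∧
          (∀ a b : S, φ (a ⊔ b) = φ a ⊔ φ b) ∧
          (∀ a b : S, δ a b ↔ φ a ⊓ φ b ≠ ⊥)),
        -- (2) embedding into a distributive lattice with an additive weak contact
        (∃ (L : Type u) (_ : DistribLattice L) (_ : OrderBot L)
          (δL : L → L → Prop) (φ : S → L),
          (∀ a b : L, δL a b → δL b a) ∧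
          (∀ a b : L, δL a b → ⊥ < a ∧ ⊥ < b) ∧
          (∀ a b a₁ b₁ : L, δL a b → a ≤ a₁ → b ≤ b₁ → δL a₁ b₁) ∧
          (∀ n : L, n ≠ ⊥ → δL n n) ∧
          (∀ a b c : L, δL a (b ⊔ c) → δL a b ∨ δL a c) ∧
          Function.Injective φ ∧ φ ⊥ = ⊥ ∧
          (∀ a b : S, φ (a ⊔ b) = φ a ⊔ φ b) ∧
          (∀ a b : S, δ a b ↔ δL (φ a) (φ b))),
        -- (3) (D1) and (D2)
        ((∀ a b c₀ c₁ : S, b ≤ a ⊔ c₀ → b ≤ a ⊔ c₁ → ¬ δ c₀ c₁ → b ≤ a) ∧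
          (∀ (n : ℕ) (a b : S) (c : Fin n → Fin 2 → S),
            (∀ i, ¬ δ (c i 0) (c i 1)) →
            (∀ f : Fin n → Fin 2,
              b ≤ Finset.univ.sup (fun i => c i (f i)) ∨
              a ≤ Finset.univ.sup (fun i => c i (f i))) →
            ¬ δ b a)) ] :=
  contact_semilattice_tfae_general δ
end

section
/- Every weak contact semilattice satisfying (D1) can be embedded into a Boolean algebra equipped with some weak contact relation (not necessarily overlap or additive). -/
universe u

/-!
Represent `S` by sets of ideals: `a` goes to the set of `δ`-prime ideals (ideals containing one
of `c, d` whenever `¬ δ c d`) that omit `a`. Non-contacting elements then go to disjoint sets,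
and (D1) is exactly what makes an ideal maximal among those omitting `a` a `δ`-prime one, so by
Zorn's lemma the representation reflects the order. On the powerset algebra one declares two
sets in contact when they meet or contain the images of two contacting elements.
-/

namespace Order.Ideal

theorem exists_le_maximal_notMem {P : Type*} [LE P] {I : Ideal P} {a : P} (ha : a ∉ I) :
    ∃ J, I ≤ J ∧ Maximal (fun J : Ideal P => a ∉ J) J := by
  refine zorn_le_nonempty₀ {J | a ∉ J} (fun C hC hchain J hJ => ?_) I ha
  have hC' : IsChain (· ⊆ ·) (SetLike.coe '' C) :=
    hchain.image_of_map_rel (· ≤ ·) _ SetLike.coe fun _ _ h => h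
  let U := IsIdeal.toIdeal <|
    isIdeal_sUnion_of_isChain (by simp [Ideal.isIdeal]) hC' ⟨J, J, hJ, rfl⟩
  refine ⟨U, ?_, fun K hK => ?_⟩
  · simpa [U, mem_toIdeal] using fun K hK => hC hK
  · simpa [U, le_toIdeal] using Set.subset_biUnion_of_mem hK

end Order.Ideal

open Order

section Representation

variable {S : Type*} [SemilatticeSup S] (δ : S → S → Prop)

def IsContactPrime (I : Ideal S) : Prop :=
  ∀ c d, ¬ δ c d → c ∈ I ∨ d ∈ I

def contactRep (a : S) : Set (Ideal S) :=
  {I | IsContactPrime δ I ∧ a ∉ I}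

theorem contactRep_sup (a b : S) : contactRep δ (a ⊔ b) = contactRep δ a ⊔ contactRep δ b := by
  ext I
  simp only [contactRep, Set.sup_eq_union, Set.mem_union, Set.mem_ofPred_eq, Ideal.sup_mem_iff]
  tauto

theorem contactRep_bot [OrderBot S] : contactRep δ ⊥ = ⊥ := by
  ext I
  simp [contactRep, Ideal.bot_mem]

theorem contactRep_inf_eq_bot {a b : S} (hab : ¬ δ a b) :
    contactRep δ a ⊓ contactRep δ b = ⊥ := by
  ext I
  simp only [contactRep, Set.inf_eq_inter, Set.mem_inter_iff, Set.mem_ofPred_eq,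
    Set.bot_eq_empty, Set.mem_empty_iff_false, iff_false]
  rintro ⟨⟨hI, haI⟩, -, hbI⟩
  exact (hI a b hab).elim haI hbI

variable {δ} [OrderBot S]

theorem isContactPrime_of_maximal_notMem
    (hD1 : ∀ a b c₀ c₁ : S, b ≤ a ⊔ c₀ → b ≤ a ⊔ c₁ → ¬ δ c₀ c₁ → b ≤ a)
    {a : S} {I : Ideal S} (hI : Maximal (fun J : Ideal S => a ∉ J) I) :
    IsContactPrime δ I := by
  by_contra! hprime
  obtain ⟨c₀, c₁, hc, hc₀, hc₁⟩ : ∃ c₀ c₁, ¬ δ c₀ c₁ ∧ c₀ ∉ I ∧ c₁ ∉ I := by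
    simpa [IsContactPrime, not_or] using hprime
  have below_sup (c : S) (hc : c ∉ I) : ∃ m ∈ I, a ≤ m ⊔ c := by
    have ha : a ∈ I ⊔ Ideal.principal c := by
      by_contra ha
      exact hc (hI.eq_of_le ha le_sup_left ▸ Ideal.mem_of_mem_of_le Ideal.mem_principal_self
        le_sup_right)
    obtain ⟨m, hm, c', hc', hac⟩ := Ideal.mem_sup.1 ha
    exact ⟨m, hm, hac.trans (sup_le_sup_left (Ideal.mem_principal.1 hc') m)⟩
  obtain ⟨m₀, hm₀, ha₀⟩ := below_sup c₀ hc₀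
  obtain ⟨m₁, hm₁, ha₁⟩ := below_sup c₁ hc₁
  have hle : a ≤ m₀ ⊔ m₁ :=
    hD1 _ a c₀ c₁ (ha₀.trans (sup_le_sup_right le_sup_left c₀))
      (ha₁.trans (sup_le_sup_right le_sup_right c₁)) hc
  exact hI.prop (I.lower hle (Ideal.sup_mem hm₀ hm₁))

theorem contactRep_le_contactRep_iff
    (hD1 : ∀ a b c₀ c₁ : S, b ≤ a ⊔ c₀ → b ≤ a ⊔ c₁ → ¬ δ c₀ c₁ → b ≤ a) {a b : S} :
    contactRep δ a ≤ contactRep δ b ↔ a ≤ b := by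
  refine ⟨fun h => ?_, fun hab I ⟨hI, haI⟩ => ⟨hI, fun hbI => haI (I.lower hab hbI)⟩⟩
  by_contra hab
  obtain ⟨J, hbJ, hJ⟩ := Ideal.exists_le_maximal_notMem (I := Ideal.principal b)
    (Ideal.mem_principal.not.2 hab)
  exact (h ⟨isContactPrime_of_maximal_notMem hD1 hJ, hJ.prop⟩).2
    (Ideal.principal_le_iff.1 hbJ)

end Representation

section InducedContact

variable {S B : Type*} [BooleanAlgebra B] {δ : S → S → Prop} {κ : S → B}

def inducedContact (δ : S → S → Prop) (κ : S → B) (x y : B) : Prop :=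
  x ⊓ y ≠ ⊥ ∨ ∃ a b, δ a b ∧ κ a ≤ x ∧ κ b ≤ y

theorem inducedContact_symm (hSym : ∀ a b, δ a b → δ b a) {x y : B}
    (h : inducedContact δ κ x y) : inducedContact δ κ y x := by
  rcases h with h | ⟨a, b, hab, ha, hb⟩
  · exact Or.inl (by rwa [inf_comm])
  · exact Or.inr ⟨b, a, hSym a b hab, hb, ha⟩

theorem inducedContact_bot_lt [Preorder S] [OrderBot S] (hEmp : ∀ a b, δ a b → ⊥ < a ∧ ⊥ < b)
    (hκ : ∀ a, ⊥ < a → ⊥ < κ a) {x y : B} (h : inducedContact δ κ x y) : ⊥ < x ∧ ⊥ < y := by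
  rcases h with h | ⟨a, b, hab, ha, hb⟩
  · simp only [bot_lt_iff_ne_bot]
    exact ⟨fun hx => h (by simp [hx]), fun hy => h (by simp [hy])⟩
  · exact ⟨(hκ a (hEmp a b hab).1).trans_le ha, (hκ b (hEmp a b hab).2).trans_le hb⟩

theorem inducedContact_mono {x y x₁ y₁ : B} (h : inducedContact δ κ x y) (hx : x ≤ x₁)
    (hy : y ≤ y₁) : inducedContact δ κ x₁ y₁ := by
  rcases h with h | ⟨a, b, hab, ha, hb⟩
  · exact Or.inl fun h₁ => h (le_bot_iff.1 (h₁ ▸ inf_le_inf hx hy))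
  · exact Or.inr ⟨a, b, hab, ha.trans hx, hb.trans hy⟩

theorem inducedContact_self {x : B} (hx : x ≠ ⊥) : inducedContact δ κ x x :=
  Or.inl (by rwa [inf_idem])

theorem inducedContact_apply_iff [Preorder S]
    (hExt : ∀ a b a₁ b₁, δ a b → a ≤ a₁ → b ≤ b₁ → δ a₁ b₁)
    (hκ : ∀ a b, κ a ≤ κ b ↔ a ≤ b) (hdisj : ∀ a b, ¬ δ a b → κ a ⊓ κ b = ⊥) {a b : S} :
    inducedContact δ κ (κ a) (κ b) ↔ δ a b := by
  refine ⟨?_, fun hab => Or.inr ⟨a, b, hab, le_rfl, le_rfl⟩⟩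
  rintro (h | ⟨c, d, hcd, hc, hd⟩)
  · by_contra hab
    exact h (hdisj a b hab)
  · exact hExt c d a b hcd ((hκ c a).1 hc) ((hκ d b).1 hd)

end InducedContact

theorem d1_embeds_into_weak_contact_BA_general {S : Type u} [SemilatticeSup S] [OrderBot S]
    (δ : S → S → Prop)
    (hSym : ∀ a b : S, δ a b → δ b a)
    (hEmp : ∀ a b : S, δ a b → ⊥ < a ∧ ⊥ < b)
    (hExt : ∀ a b a₁ b₁ : S, δ a b → a ≤ a₁ → b ≤ b₁ → δ a₁ b₁)
    (hD1 : ∀ a b c₀ c₁ : S, b ≤ a ⊔ c₀ → b ≤ a ⊔ c₁ → ¬ δ c₀ c₁ → b ≤ a) :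
    ∃ (B : Type u) (_ : BooleanAlgebra B) (δB : B → B → Prop) (φ : S → B),
      (∀ a b : B, δB a b → δB b a) ∧
      (∀ a b : B, δB a b → ⊥ < a ∧ ⊥ < b) ∧
      (∀ a b a₁ b₁ : B, δB a b → a ≤ a₁ → b ≤ b₁ → δB a₁ b₁) ∧
      (∀ n : B, n ≠ ⊥ → δB n n) ∧
      Function.Injective φ ∧ φ ⊥ = ⊥ ∧
      (∀ a b : S, φ (a ⊔ b) = φ a ⊔ φ b) ∧
      (∀ a b : S, δ a b ↔ δB (φ a) (φ b)) := by
  have hle (a b : S) : contactRep δ a ≤ contactRep δ b ↔ a ≤ b :=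
    contactRep_le_contactRep_iff hD1
  have hpos (a : S) (ha : ⊥ < a) : ⊥ < contactRep δ a := by
    simpa [← contactRep_bot δ, lt_iff_le_not_ge, hle] using ha
  have hdisj (a b : S) (hab : ¬ δ a b) : contactRep δ a ⊓ contactRep δ b = ⊥ :=
    contactRep_inf_eq_bot δ hab
  refine ⟨Set (Ideal S), inferInstance, inducedContact δ (contactRep δ), contactRep δ,
    fun _ _ => inducedContact_symm hSym, fun _ _ => inducedContact_bot_lt hEmp hpos,
    fun _ _ _ _ => inducedContact_mono, fun _ => inducedContact_self,
    fun a b h => le_antisymm ((hle a b).1 h.le) ((hle b a).1 h.ge), contactRep_bot δ,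
    contactRep_sup δ, fun a b => (inducedContact_apply_iff hExt hle hdisj).symm⟩

/-- Every weak contact semilattice satisfying (D1) embeds into a Boolean
algebra equipped with some weak contact relation. -/
theorem d1_embeds_into_weak_contact_BA {S : Type u} [SemilatticeSup S] [OrderBot S]
    (δ : S → S → Prop)
    (hSym : ∀ a b : S, δ a b → δ b a)
    (hEmp : ∀ a b : S, δ a b → ⊥ < a ∧ ⊥ < b)
    (hExt : ∀ a b a₁ b₁ : S, δ a b → a ≤ a₁ → b ≤ b₁ → δ a₁ b₁)
    (hRef : ∀ n : S, n ≠ ⊥ → δ n n)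
    (hD1 : ∀ a b c₀ c₁ : S, b ≤ a ⊔ c₀ → b ≤ a ⊔ c₁ → ¬ δ c₀ c₁ → b ≤ a) :
    ∃ (B : Type u) (_ : BooleanAlgebra B) (δB : B → B → Prop) (φ : S → B),
      (∀ a b : B, δB a b → δB b a) ∧
      (∀ a b : B, δB a b → ⊥ < a ∧ ⊥ < b) ∧
      (∀ a b a₁ b₁ : B, δB a b → a ≤ a₁ → b ≤ b₁ → δB a₁ b₁) ∧
      (∀ n : B, n ≠ ⊥ → δB n n) ∧
      Function.Injective φ ∧ φ ⊥ = ⊥ ∧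
      (∀ a b : S, φ (a ⊔ b) = φ a ⊔ φ b) ∧
      (∀ a b : S, δ a b ↔ δB (φ a) (φ b)) :=
  d1_embeds_into_weak_contact_BA_general δ hSym hEmp hExt hD1
end

section
/- If a weak contact semilattice embeds into a distributive lattice with a weak contact relation, then it satisfies condition (D1). -/
/-- If a weak contact semilattice embeds into a distributive lattice with
a weak contact relation, then it satisfies (D1). -/
theorem embeddable_weak_implies_d1 {S L : Type*} [SemilatticeSup S] [OrderBot S]
    [DistribLattice L] [OrderBot L]
    (δS : S → S → Prop) (δL : L → L → Prop)
    (hSymS : ∀ a b : S, δS a b → δS b a)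
    (hEmpS : ∀ a b : S, δS a b → ⊥ < a ∧ ⊥ < b)
    (hExtS : ∀ a b a₁ b₁ : S, δS a b → a ≤ a₁ → b ≤ b₁ → δS a₁ b₁)
    (hRefS : ∀ n : S, n ≠ ⊥ → δS n n)
    (hSymL : ∀ a b : L, δL a b → δL b a)
    (hEmpL : ∀ a b : L, δL a b → ⊥ < a ∧ ⊥ < b)
    (hExtL : ∀ a b a₁ b₁ : L, δL a b → a ≤ a₁ → b ≤ b₁ → δL a₁ b₁)
    (hRefL : ∀ n : L, n ≠ ⊥ → δL n n)
    (φ : S → L) (hinj : Function.Injective φ) (hbot : φ ⊥ = ⊥)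
    (hsup : ∀ a b : S, φ (a ⊔ b) = φ a ⊔ φ b)
    (hδ : ∀ a b : S, δS a b ↔ δL (φ a) (φ b)) :
    ∀ a b c₀ c₁ : S, b ≤ a ⊔ c₀ → b ≤ a ⊔ c₁ → ¬ δS c₀ c₁ → b ≤ a := by
  intro a b c₀ c₁ h0 h1 hnd
  have hmono : ∀ x y : S, x ≤ y → φ x ≤ φ y := by
    intro x y hxy
    have : φ (x ⊔ y) = φ y := by rw [sup_eq_right.mpr hxy]
    rw [hsup] at this
    exact le_of_sup_eq this
  -- φ c₀ ⊓ φ c₁ = ⊥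
  have hinf : φ c₀ ⊓ φ c₁ = ⊥ := by
    by_contra hne
    have hd : δL (φ c₀ ⊓ φ c₁) (φ c₀ ⊓ φ c₁) := hRefL _ hne
    exact hnd ((hδ c₀ c₁).mpr (hExtL _ _ _ _ hd inf_le_left inf_le_right))
  have hb : φ b ≤ φ a := by
    have h0' := hmono _ _ h0
    have h1' := hmono _ _ h1
    rw [hsup] at h0' h1'
    have : φ b ≤ (φ a ⊔ φ c₀) ⊓ (φ a ⊔ φ c₁) := le_inf h0' h1'
    rw [← sup_inf_left, hinf, sup_bot_eq] at this
    exact this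
  have : φ (a ⊔ b) = φ a := by rw [hsup]; exact sup_eq_left.mpr hb
  have := hinj this
  exact le_of_sup_eq (sup_comm a b ▸ this)
end

section
/- Every weak contact Boolean algebra embeds (preserving 0, join, and contact) into a complete atomic Boolean algebra with a weak contact relation. -/
universe u

open Order

section Aux

variable {A : Type u} [BooleanAlgebra A]

/-- Separation: if `¬ a ≤ b` there is a prime ideal containing `b` but not `a`. -/
lemma exists_prime_sep {a b : A} (h : ¬ a ≤ b) :
    ∃ J : Order.Ideal A, J.IsPrime ∧ b ∈ J ∧ a ∉ J := by
  set x : A := a ⊓ bᶜ with hxdef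
  have hx : x ≠ ⊥ := by
    intro hbot
    apply h
    have : a \ b = ⊥ := by rwa [sdiff_eq]
    exact sdiff_eq_bot_iff.mp this
  have hdisj : Disjoint ((PFilter.principal x : PFilter A) : Set A)
      ((Order.Ideal.principal b : Order.Ideal A) : Set A) := by
    rw [Set.disjoint_left]
    intro y hyF hyI
    have h1 : x ≤ y := PFilter.mem_principal.mp hyF
    have h2 : y ≤ b := Order.Ideal.mem_principal.mp hyI
    have hxb : x ≤ b ⊓ bᶜ := le_inf (h1.trans h2) inf_le_right
    rw [inf_compl_eq_bot] at hxb
    exact hx (le_bot_iff.mp hxb)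
  obtain ⟨J, hJp, hJI, hJd⟩ := DistribLattice.prime_ideal_of_disjoint_filter_ideal hdisj
  refine ⟨J, hJp, hJI (Order.Ideal.mem_principal_self), fun haJ => ?_⟩
  have hxJ : x ∈ J := J.lower inf_le_left haJ
  have hxF : x ∈ PFilter.principal x := PFilter.mem_principal.mpr le_rfl
  exact (Set.disjoint_left.mp hJd hxF) hxJ

/-- If `a ≠ ⊥` there is a prime ideal not containing `a`. -/
lemma exists_prime_not_mem {a : A} (h : a ≠ ⊥) :
    ∃ J : Order.Ideal A, J.IsPrime ∧ a ∉ J := by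
  obtain ⟨J, hJ, _, haJ⟩ := exists_prime_sep (a := a) (b := ⊥) (by simpa using h)
  exact ⟨J, hJ, haJ⟩

end Aux

/-- Every weak contact Boolean algebra embeds (preserving `⊥`, join, and
contact both ways) into a complete atomic Boolean algebra carrying a weak contact relation. -/
theorem weak_contact_BA_embeds_into_complete_atomic {A : Type u} [BooleanAlgebra A]
    (δ : A → A → Prop)
    (hSym : ∀ a b : A, δ a b → δ b a)
    (hEmp : ∀ a b : A, δ a b → ⊥ < a ∧ ⊥ < b)
    (hExt : ∀ a b a₁ b₁ : A, δ a b → a ≤ a₁ → b ≤ b₁ → δ a₁ b₁)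
    (hRef : ∀ n : A, n ≠ ⊥ → δ n n) :
    ∃ (C : Type u) (_ : CompleteBooleanAlgebra C) (_ : IsAtomic C)
      (δC : C → C → Prop) (χ : A → C),
      (∀ a b : C, δC a b → δC b a) ∧
      (∀ a b : C, δC a b → ⊥ < a ∧ ⊥ < b) ∧
      (∀ a b a₁ b₁ : C, δC a b → a ≤ a₁ → b ≤ b₁ → δC a₁ b₁) ∧
      (∀ n : C, n ≠ ⊥ → δC n n) ∧
      Function.Injective χ ∧ χ ⊥ = ⊥ ∧
      (∀ a b : A, χ (a ⊔ b) = χ a ⊔ χ b) ∧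
      (∀ a b : A, δ a b ↔ δC (χ a) (χ b)) := by
  classical
  set X := {J : Order.Ideal A // J.IsPrime} with hX
  set χ : A → Set X := fun a => {J : X | a ∉ J.1} with hχ
  -- key: χ a ⊆ χ b → a ≤ b
  have hle : ∀ a b : A, χ a ⊆ χ b → a ≤ b := by
    intro a b hsub
    by_contra hab
    obtain ⟨J, hJp, hbJ, haJ⟩ := exists_prime_sep hab
    have : (⟨J, hJp⟩ : X) ∈ χ a := haJ
    exact (hsub this) hbJ
  have hne : ∀ a : A, a ≠ ⊥ → (χ a).Nonempty := by
    intro a ha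
    obtain ⟨J, hJp, haJ⟩ := exists_prime_not_mem ha
    exact ⟨⟨J, hJp⟩, haJ⟩
  set δC : Set X → Set X → Prop :=
    fun u v => (u ∩ v).Nonempty ∨ ∃ a b : A, δ a b ∧ χ a ⊆ u ∧ χ b ⊆ v with hδC
  refine ⟨Set X, inferInstance, inferInstance, δC, χ, ?_, ?_, ?_, ?_, ?_, ?_, ?_, ?_⟩
  · -- symmetry
    rintro u v (h | ⟨a, b, hab, hau, hbv⟩)
    · exact Or.inl (by rwa [Set.inter_comm])
    · exact Or.inr ⟨b, a, hSym a b hab, hbv, hau⟩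
  · -- nonemptiness
    rintro u v (⟨x, hxu, hxv⟩ | ⟨a, b, hab, hau, hbv⟩)
    · constructor <;> rw [bot_lt_iff_ne_bot]
      · intro h; rw [h] at hxu; simp at hxu
      · intro h; rw [h] at hxv; simp at hxv
    · obtain ⟨ha, hb⟩ := hEmp a b hab
      constructor <;> rw [bot_lt_iff_ne_bot]
      · intro h
        obtain ⟨J, hJ⟩ := hne a ha.ne'
        have := hau hJ; rw [h] at this; simp at this
      · intro h
        obtain ⟨J, hJ⟩ := hne b hb.ne'
        have := hbv hJ; rw [h] at this; simp at this
  · -- extension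
    rintro u v u₁ v₁ (⟨x, hxu, hxv⟩ | ⟨a, b, hab, hau, hbv⟩) hu hv
    · exact Or.inl ⟨x, hu hxu, hv hxv⟩
    · exact Or.inr ⟨a, b, hab, hau.trans hu, hbv.trans hv⟩
  · -- reflexivity
    intro n hn
    exact Or.inl (by simpa [Set.inter_self] using Set.nonempty_iff_ne_empty.mpr hn)
  · -- injectivity
    intro a b hab
    exact le_antisymm (hle a b hab.le) (hle b a hab.ge)
  · -- χ ⊥ = ⊥
    ext J
    simp [hχ, Order.Ideal.bot_mem]
  · -- join
    intro a b
    ext J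
    simp only [hχ, Set.mem_setOf_eq, Set.sup_eq_union, Set.mem_union]
    rw [Order.Ideal.sup_mem_iff]
    tauto
  · -- contact iff
    intro a b
    constructor
    · intro hab
      exact Or.inr ⟨a, b, hab, le_rfl, le_rfl⟩
    · rintro (⟨⟨J, hJp⟩, haJ, hbJ⟩ | ⟨a', b', hab', ha', hb'⟩)
      · have hmeet : a ⊓ b ∉ J := fun h => (hJp.mem_or_mem h).elim haJ hbJ
        have hne' : a ⊓ b ≠ ⊥ := fun h => hmeet (h ▸ J.bot_mem)
        exact hExt _ _ _ _ (hRef _ hne') inf_le_left inf_le_right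
      · exact hExt _ _ _ _ hab' (hle _ _ ha') (hle _ _ hb')
end

section
/- On M₃, the relation δ given by a δ b, a δ c (and symmetrically), ¬(b δ c), together with all relations forced by Ext and Ref, defines an additive weak contact relation that fails condition (D1): b ≤ a ⊔ b, b ≤ a ⊔ c, ¬(b δ c), but b ≰ a. -/
/-- On `M₃`, the relation `x δ y ↔ x ≠ ⊥ ∧ y ≠ ⊥ ∧ {x,y} ≠ {b,c}` is an
additive weak contact relation which fails (D1): `b ≤ a ⊔ b`, `b ≤ a ⊔ c`, `¬(b δ c)`,
but `b ≰ a`. -/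
theorem M3_additive_contact_fails_d1 {M : Type*} [Lattice M] [BoundedOrder M] (a b c : M)
    (huniv : ∀ x : M, x = ⊥ ∨ x = a ∨ x = b ∨ x = c ∨ x = ⊤)
    (ha : a ≠ ⊥) (hb : b ≠ ⊥) (hc : c ≠ ⊥)
    (hab : a ≠ b) (hac : a ≠ c) (hbc : b ≠ c)
    (hiab : a ⊓ b = ⊥) (hiac : a ⊓ c = ⊥) (hibc : b ⊓ c = ⊥)
    (hsab : a ⊔ b = ⊤) (hsac : a ⊔ c = ⊤) (hsbc : b ⊔ c = ⊤) :
    let δ : M → M → Prop := fun x y =>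
      x ≠ ⊥ ∧ y ≠ ⊥ ∧ ¬ ((x = b ∧ y = c) ∨ (x = c ∧ y = b))
    -- δ is a weak contact relation:
    ((∀ x y : M, δ x y → δ y x) ∧
     (∀ x y : M, δ x y → ⊥ < x ∧ ⊥ < y) ∧
     (∀ x y x₁ y₁ : M, δ x y → x ≤ x₁ → y ≤ y₁ → δ x₁ y₁) ∧
     (∀ n : M, n ≠ ⊥ → δ n n)) ∧
    -- δ is additive:
    (∀ x y z : M, δ x (y ⊔ z) → δ x y ∨ δ x z) ∧
    -- but (D1) fails:
    (b ≤ a ⊔ b ∧ b ≤ a ⊔ c ∧ ¬ δ b c ∧ ¬ b ≤ a) := by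
  intro δ
  have leb : ∀ x : M, x ≠ ⊥ → x ≤ b → x = b := by
    intro x hx hxb
    rcases huniv x with h | h | h | h | h
    · exact absurd h hx
    · subst h; exact absurd (by rw [← hiab, inf_eq_left.mpr hxb]) hx
    · exact h
    · subst h
      exact absurd (by rw [← hibc, inf_comm, inf_eq_left.mpr hxb]) hx
    · subst h
      have : b = ⊤ := top_le_iff.mp hxb
      exact this.symm
  have lec : ∀ x : M, x ≠ ⊥ → x ≤ c → x = c := by
    intro x hx hxc
    rcases huniv x with h | h | h | h | h
    · exact absurd h hx
    · subst h; exact absurd (by rw [← hiac, inf_eq_left.mpr hxc]) hx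
    · subst h
      exact absurd (by rw [← hibc, inf_eq_left.mpr hxc]) hx
    · exact h
    · subst h
      have : c = ⊤ := top_le_iff.mp hxc
      exact this.symm
  refine ⟨⟨?_, ?_, ?_, ?_⟩, ?_, ?_, ?_, ?_, ?_⟩
  · rintro x y ⟨hx, hy, hn⟩
    exact ⟨hy, hx, fun h => hn (h.elim (fun ⟨h1, h2⟩ => Or.inr ⟨h2, h1⟩)
      (fun ⟨h1, h2⟩ => Or.inl ⟨h2, h1⟩))⟩
  · rintro x y ⟨hx, hy, -⟩
    exact ⟨bot_lt_iff_ne_bot.mpr hx, bot_lt_iff_ne_bot.mpr hy⟩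
  · rintro x y x₁ y₁ ⟨hx, hy, hn⟩ hxx hyy
    refine ⟨fun h => hx (le_bot_iff.mp (h ▸ hxx)), fun h => hy (le_bot_iff.mp (h ▸ hyy)), ?_⟩
    rintro (⟨h1, h2⟩ | ⟨h1, h2⟩)
    · exact hn (Or.inl ⟨leb x hx (h1 ▸ hxx), lec y hy (h2 ▸ hyy)⟩)
    · exact hn (Or.inr ⟨lec x hx (h1 ▸ hxx), leb y hy (h2 ▸ hyy)⟩)
  · intro n hn
    refine ⟨hn, hn, ?_⟩
    rintro (⟨h1, h2⟩ | ⟨h1, h2⟩) <;> exact hbc (h1 ▸ h2 ▸ rfl)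
  · rintro x y z ⟨hx, hyz, hn⟩
    by_cases hy : y = ⊥
    · subst hy
      right
      refine ⟨hx, by simpa using hyz, ?_⟩
      simpa using hn
    by_cases hz : z = ⊥
    · subst hz
      left
      refine ⟨hx, by simpa using hyz, ?_⟩
      simpa using hn
    by_contra hcon
    push_neg at hcon
    obtain ⟨h1, h2⟩ := hcon
    have e1 : (x = b ∧ y = c) ∨ (x = c ∧ y = b) := by
      by_contra h; exact h1 ⟨hx, hy, h⟩
    have e2 : (x = b ∧ z = c) ∨ (x = c ∧ z = b) := by
      by_contra h; exact h2 ⟨hx, hz, h⟩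
    rcases e1 with ⟨hxb, hyc⟩ | ⟨hxc, hyb⟩
    · rcases e2 with ⟨-, hzc⟩ | ⟨hxc, -⟩
      · exact hn (Or.inl ⟨hxb, by rw [hyc, hzc, sup_idem]⟩)
      · exact hbc (hxb ▸ hxc)
    · rcases e2 with ⟨hxb, -⟩ | ⟨-, hzb⟩
      · exact hbc (hxb ▸ hxc)
      · exact hn (Or.inr ⟨hxc, by rw [hyb, hzb, sup_idem]⟩)
  · exact le_sup_right
  · rw [hsac]; exact le_top
  · rintro ⟨-, -, hn⟩; exact hn (Or.inl ⟨rfl, rfl⟩)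
  · intro h
    exact hb (by rw [← hiab, inf_eq_right.mpr h])
end

section
/- On the eight-element Boolean algebra B₈ with atoms a, b, c, the relation δ declaring ¬(c δ a), ¬(c δ b) (and symmetrically), with all other pairs of nonzero elements in contact, is a weak contact relation that is not additive: c δ (a ⊔ b) but ¬(c δ a) and ¬(c δ b). -/
lemma sub_singleton {α : Type*} {x : Set α} {i : α} (h : x ≤ ({i} : Set α))
    (hx : x ≠ ⊥) : x = {i} := by
  rcases (Set.subset_singleton_iff_eq).1 h with h' | h'
  · exact absurd h' hx
  · exact h'

/-- On the eight-element Boolean algebra of subsets of a three-element set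
with atoms `a = {0}`, `b = {1}`, `c = {2}`, the relation putting every pair of nonempty
sets in contact except `{a,c}` and `{b,c}` is a weak contact relation that is not
additive: `c δ (a ⊔ b)` but `¬(c δ a)` and `¬(c δ b)`. -/
theorem B8_weak_contact_not_additive :
    let a : Set (Fin 3) := {0}
    let b : Set (Fin 3) := {1}
    let c : Set (Fin 3) := {2}
    let δ : Set (Fin 3) → Set (Fin 3) → Prop := fun x y =>
      x ≠ ⊥ ∧ y ≠ ⊥ ∧ ¬ ((x = a ∧ y = c) ∨ (x = c ∧ y = a)) ∧
        ¬ ((x = b ∧ y = c) ∨ (x = c ∧ y = b))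
    -- δ is a weak contact relation:
    ((∀ x y : Set (Fin 3), δ x y → δ y x) ∧
     (∀ x y : Set (Fin 3), δ x y → ⊥ < x ∧ ⊥ < y) ∧
     (∀ x y x₁ y₁ : Set (Fin 3), δ x y → x ≤ x₁ → y ≤ y₁ → δ x₁ y₁) ∧
     (∀ n : Set (Fin 3), n ≠ ⊥ → δ n n)) ∧
    -- but δ is not additive:
    (δ c (a ⊔ b) ∧ ¬ δ c a ∧ ¬ δ c b) := by
  intro a b c δ
  have hac : a ≠ c := by simp [a, c, Set.singleton_eq_singleton_iff]
  have hbc : b ≠ c := by simp [b, c, Set.singleton_eq_singleton_iff]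
  refine ⟨⟨?_, ?_, ?_, ?_⟩, ?_, ?_, ?_⟩
  · rintro x y ⟨hx, hy, h1, h2⟩
    exact ⟨hy, hx, by tauto, by tauto⟩
  · rintro x y ⟨hx, hy, -⟩
    exact ⟨bot_lt_iff_ne_bot.2 hx, bot_lt_iff_ne_bot.2 hy⟩
  · rintro x y x₁ y₁ ⟨hx, hy, h1, h2⟩ hxx hyy
    refine ⟨fun h => hx (le_bot_iff.1 (h ▸ hxx)), fun h => hy (le_bot_iff.1 (h ▸ hyy)),
      ?_, ?_⟩
    · rintro (⟨rfl, rfl⟩ | ⟨rfl, rfl⟩)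
      · exact h1 (Or.inl ⟨sub_singleton hxx hx, sub_singleton hyy hy⟩)
      · exact h1 (Or.inr ⟨sub_singleton hxx hx, sub_singleton hyy hy⟩)
    · rintro (⟨rfl, rfl⟩ | ⟨rfl, rfl⟩)
      · exact h2 (Or.inl ⟨sub_singleton hxx hx, sub_singleton hyy hy⟩)
      · exact h2 (Or.inr ⟨sub_singleton hxx hx, sub_singleton hyy hy⟩)
  · intro n hn
    refine ⟨hn, hn, ?_, ?_⟩
    · rintro (⟨rfl, h⟩ | ⟨rfl, h⟩) <;> [exact hac h; exact hac h.symm]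
    · rintro (⟨rfl, h⟩ | ⟨rfl, h⟩) <;> [exact hbc h; exact hbc h.symm]
  · refine ⟨?_, ?_, ?_, ?_⟩
    · simp [c, Set.ext_iff]
    · have : a ⊔ b ≠ ⊥ := by
        intro h
        have := Set.ext_iff.1 h 0
        simp [a, b] at this
      exact this
    · rintro (⟨h, -⟩ | ⟨-, h⟩)
      · exact hac h.symm
      · have := Set.ext_iff.1 h 1
        simp [a, b] at this
    · rintro (⟨h, -⟩ | ⟨-, h⟩)
      · exact hbc h.symm
      · have := Set.ext_iff.1 h 0
        simp [a, b] at this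
  · rintro ⟨-, -, h, -⟩
    exact h (Or.inr ⟨rfl, rfl⟩)
  · rintro ⟨-, -, -, h⟩
    exact h (Or.inr ⟨rfl, rfl⟩)
end
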